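/- arXiv:2312.13153 — 7 statements merged into one kernel-verified Lean document; each statement's English description precedes it below -/
import Mathlib

section
/- If (Z,ρ,R) and (Z',ρ',R') are ergodic and disjoint, and (Y,ν,Id) is an identity map, then R is disjoint from the product system R' × Id equipped with the product measure ρ' ⊗ ν: every (R × R' × Id)-invariant probability measure on Z × Z' × Y with marginals ρ, ρ', ν whose (Z' × Y)-marginal is ρ' ⊗ ν equals ρ ⊗ ρ' ⊗ ν. -/
open MeasureTheory Set ENNReal

lemma invariant_le_ergodic {W : Type*} [MeasurableSpace W] {m : Measure W}
    [IsProbabilityMeasure m] {T : W → W} (hT : Ergodic T m) {κ : Measure W}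
    (hκm : κ ≤ m) (hκinv : κ.map T = κ) : κ = κ Set.univ • m := by
  have hTm : Measurable T := hT.measurable
  have hmap : m.map T = m := hT.toMeasurePreserving.map_eq
  haveI : IsFiniteMeasure κ :=
    ⟨lt_of_le_of_lt (hκm Set.univ) (measure_lt_top m _)⟩
  have hac : κ ≪ m := Measure.absolutelyContinuous_of_le hκm
  set f : W → ℝ≥0∞ := κ.rnDeriv m with hfdef
  have hf : Measurable f := Measure.measurable_rnDeriv κ m
  have hfle : f ≤ᵐ[m] 1 := Measure.rnDeriv_le_one_of_le hκm
  set f' : W → ℝ≥0∞ := fun x => min (f x) 1 with hf'def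
  have hf' : Measurable f' := hf.min measurable_const
  have hf'le : ∀ x, f' x ≤ 1 := fun x => min_le_right _ _
  have hf'ne : ∀ x, f' x ≠ ∞ := fun x => ne_top_of_le_ne_top one_ne_top (hf'le x)
  have hff' : f =ᵐ[m] f' := hfle.mono fun x hx => (min_eq_left hx).symm
  have hκf' : m.withDensity f' = κ := by
    rw [← withDensity_congr_ae hff', Measure.withDensity_rnDeriv_eq κ m hac]
  -- key identity 1
  have key1 : ∀ g : W → ℝ≥0∞, Measurable g →
      (∫⁻ x, f' x * g (T x) ∂m) = ∫⁻ x, f' x * g x ∂m := by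
    intro g hg
    have h1 : (∫⁻ x, g (T x) ∂κ) = ∫⁻ x, f' x * g (T x) ∂m := by
      rw [← hκf']
      simpa using lintegral_withDensity_eq_lintegral_mul m hf' (hg.comp hTm)
    have h2 : (∫⁻ x, g x ∂κ) = ∫⁻ x, f' x * g x ∂m := by
      rw [← hκf']
      simpa using lintegral_withDensity_eq_lintegral_mul m hf' hg
    have h3 : (∫⁻ x, g (T x) ∂κ) = ∫⁻ x, g x ∂κ := by
      conv_rhs => rw [← hκinv]
      rw [lintegral_map hg hTm]
    rw [← h1, h3, h2]
  have key2 : (∫⁻ x, f' (T x) * f' (T x) ∂m) = ∫⁻ x, f' x * f' x ∂m := by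
    conv_rhs => rw [← hmap]
    rw [lintegral_map (f := fun x => f' x * f' x) (hf'.mul hf') hTm]
  set F : W → ℝ := fun x => (f' x).toReal with hFdef
  have hFm : Measurable F := hf'.ennreal_toReal
  have hF0 : ∀ x, 0 ≤ F x := fun x => ENNReal.toReal_nonneg
  have hF1 : ∀ x, F x ≤ 1 := fun x => by
    simpa using ENNReal.toReal_mono one_ne_top (hf'le x)
  have hofReal : ∀ x y : W, ENNReal.ofReal (F x * F y) = f' x * f' y := by
    intro x y
    rw [hFdef, ← ENNReal.toReal_mul, ENNReal.ofReal_toReal (ENNReal.mul_ne_top (hf'ne x) (hf'ne y))]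
  -- real integral identities
  have hbridge0 : (∫ x, F x * F x ∂m) = (∫⁻ x, f' x * f' x ∂m).toReal := by
    rw [integral_eq_lintegral_of_nonneg_ae
      (Filter.Eventually.of_forall fun x => mul_nonneg (hF0 x) (hF0 x))
      ((hFm.mul hFm).aestronglyMeasurable)]
    congr 1
    exact lintegral_congr fun x => hofReal x x
  have hbridge1 : (∫ x, F x * F (T x) ∂m) = (∫⁻ x, f' x * f' (T x) ∂m).toReal := by
    rw [integral_eq_lintegral_of_nonneg_ae
      (Filter.Eventually.of_forall fun x => mul_nonneg (hF0 x) (hF0 _))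
      ((hFm.mul (hFm.comp hTm)).aestronglyMeasurable)]
    congr 1
    exact lintegral_congr fun x => hofReal x (T x)
  have hbridge2 : (∫ x, F (T x) * F (T x) ∂m) = (∫⁻ x, f' (T x) * f' (T x) ∂m).toReal := by
    rw [integral_eq_lintegral_of_nonneg_ae
      (Filter.Eventually.of_forall fun x => mul_nonneg (hF0 _) (hF0 _))
      (((hFm.comp hTm).mul (hFm.comp hTm)).aestronglyMeasurable)]
    congr 1
    exact lintegral_congr fun x => hofReal (T x) (T x)
  have hI1 : (∫ x, F x * F (T x) ∂m) = ∫ x, F x * F x ∂m := by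
    rw [hbridge1, hbridge0, key1 f' hf']
  have hI2 : (∫ x, F (T x) * F (T x) ∂m) = ∫ x, F x * F x ∂m := by
    rw [hbridge2, hbridge0, key2]
  -- integrability
  have hintgen : ∀ φ : W → ℝ, Measurable φ → (∀ x, 0 ≤ φ x) → (∀ x, φ x ≤ 1) →
      Integrable φ m := by
    intro φ hφ h0 h1
    refine Integrable.mono' (integrable_const 1) hφ.aestronglyMeasurable
      (Filter.Eventually.of_forall fun x => ?_)
    rw [Real.norm_eq_abs, abs_of_nonneg (h0 x)]
    exact h1 x
  have hintAA : Integrable (fun x => F x * F x) m :=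
    hintgen _ (hFm.mul hFm) (fun x => mul_nonneg (hF0 x) (hF0 x))
      (fun x => mul_le_one₀ (hF1 x) (hF0 x) (hF1 x))
  have hintAT : Integrable (fun x => F x * F (T x)) m :=
    hintgen _ (hFm.mul (hFm.comp hTm)) (fun x => mul_nonneg (hF0 x) (hF0 _))
      (fun x => mul_le_one₀ (hF1 x) (hF0 _) (hF1 _))
  have hintTT : Integrable (fun x => F (T x) * F (T x)) m :=
    hintgen _ ((hFm.comp hTm).mul (hFm.comp hTm)) (fun x => mul_nonneg (hF0 _) (hF0 _))
      (fun x => mul_le_one₀ (hF1 _) (hF0 _) (hF1 _))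
  have hintsq : Integrable (fun x => (F x - F (T x))^2) m := by
    have h : (fun x => (F x - F (T x))^2)
        = fun x => F x * F x - 2 * (F x * F (T x)) + F (T x) * F (T x) := by
      funext x; ring
    rw [h]
    exact (hintAA.sub (hintAT.const_mul 2)).add hintTT
  have hzero : (∫ x, (F x - F (T x))^2 ∂m) = 0 := by
    calc (∫ x, (F x - F (T x))^2 ∂m)
        = ∫ x, (F x * F x - 2 * (F x * F (T x)) + F (T x) * F (T x)) ∂m := by
          exact integral_congr_ae (Filter.Eventually.of_forall fun x => by ring)
      _ = (∫ x, (F x * F x - 2 * (F x * F (T x))) ∂m) + ∫ x, F (T x) * F (T x) ∂m :=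
          integral_add (hintAA.sub (hintAT.const_mul 2)) hintTT
      _ = ((∫ x, F x * F x ∂m) - ∫ x, 2 * (F x * F (T x)) ∂m) + ∫ x, F (T x) * F (T x) ∂m := by
          rw [integral_sub hintAA (hintAT.const_mul 2)]
      _ = ((∫ x, F x * F x ∂m) - 2 * ∫ x, F x * F (T x) ∂m) + ∫ x, F (T x) * F (T x) ∂m := by
          rw [integral_const_mul]
      _ = 0 := by rw [hI1, hI2]; ring
  have haesq : (fun x => (F x - F (T x))^2) =ᵐ[m] 0 :=
    (integral_eq_zero_iff_of_nonneg (fun x => sq_nonneg _) hintsq).mp hzero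
  have hFinv : F ∘ T =ᵐ[m] F := by
    refine haesq.mono fun x hx => ?_
    have h1 : (F x - F (T x))^2 = 0 := hx
    have h2 := pow_eq_zero_iff (n := 2) (by norm_num) |>.mp h1
    simp only [Function.comp_apply]
    linarith [sub_eq_zero.mp h2]
  obtain ⟨r, hr⟩ := hT.ae_eq_const_of_ae_eq_comp₀ hFm.nullMeasurable hFinv
  have hf'const : f' =ᵐ[m] fun _ => ENNReal.ofReal r := by
    refine hr.mono fun x hx => ?_
    calc f' x = ENNReal.ofReal (F x) := (ENNReal.ofReal_toReal (hf'ne x)).symm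
      _ = ENNReal.ofReal r := by rw [show F x = r from hx]
  have hκconst : κ = ENNReal.ofReal r • m := by
    rw [← hκf', withDensity_congr_ae hf'const, withDensity_const]
  rw [hκconst]
  simp


open MeasureTheory

/-- If `(Z, ρ, R)` and `(Z', ρ', R')` are ergodic and disjoint, and
`(Y, ν, Id)` is an identity map, then `R` is disjoint from the product system
`R' × Id` equipped with the product measure `ρ' ⊗ ν`: every `(R × R' × Id)`-invariant
probability measure on `Z × Z' × Y` with marginals `ρ, ρ', ν`, whose `(Z' × Y)`-marginal
is `ρ' ⊗ ν`, equals `ρ ⊗ ρ' ⊗ ν`. -/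
theorem ergodic_disjoint_from_disjoint_times_identity
    {Z Z' Y : Type*} [MeasurableSpace Z] [MeasurableSpace Z'] [MeasurableSpace Y]
    (ρ : Measure Z) (ρ' : Measure Z') (ν : Measure Y)
    [IsProbabilityMeasure ρ] [IsProbabilityMeasure ρ'] [IsProbabilityMeasure ν]
    (R : Z → Z) (R' : Z' → Z')
    (hR : Ergodic R ρ) (hR' : Ergodic R' ρ')
    (hdisj : ∀ π : Measure (Z × Z'), IsProbabilityMeasure π →
      MeasurePreserving (Prod.map R R') π π →
      π.map Prod.fst = ρ → π.map Prod.snd = ρ' → π = ρ.prod ρ')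
    (lam : Measure (Z × Z' × Y)) [IsProbabilityMeasure lam]
    (hinv : MeasurePreserving (fun p => (R p.1, R' p.2.1, p.2.2)) lam lam)
    (h1 : lam.map (fun p => p.1) = ρ)
    (h2 : lam.map (fun p => p.2.1) = ρ')
    (h3 : lam.map (fun p => p.2.2) = ν)
    (h23 : lam.map (fun p => p.2) = ρ'.prod ν) :
    lam = ρ.prod (ρ'.prod ν) := by
  have hRm : Measurable R := hR.measurable
  have hR'm : Measurable R' := hR'.measurable
  set T₀ : Z × Z' → Z × Z' := Prod.map R R' with hT₀def
  have hT₀ : Measurable T₀ := hRm.prodMap hR'm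
  set T : Z × Z' × Y → Z × Z' × Y := fun p => (R p.1, R' p.2.1, p.2.2) with hTdef
  have hTm : Measurable T :=
    (hRm.comp measurable_fst).prodMk
      ((hR'm.comp (measurable_fst.comp measurable_snd)).prodMk
        (measurable_snd.comp measurable_snd))
  set ψ : Z × Z' × Y → (Z × Z') × Y := fun p => ((p.1, p.2.1), p.2.2) with hψdef
  have hψ : Measurable ψ :=
    (measurable_fst.prodMk (measurable_fst.comp measurable_snd)).prodMk
      (measurable_snd.comp measurable_snd)
  set S : (Z × Z') × Y → (Z × Z') × Y := Prod.map T₀ id with hSdef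
  have hS : Measurable S := hT₀.prodMap measurable_id
  set m : Measure (Z × Z') := ρ.prod ρ' with hmdef
  have hmfst : m.map Prod.fst = ρ := by
    rw [hmdef]; simp
  have hmsnd : m.map Prod.snd = ρ' := by
    rw [hmdef]; simp
  have hmT₀ : MeasurePreserving T₀ m m := hR.toMeasurePreserving.prod hR'.toMeasurePreserving
  -- Step 1: the (Z × Z') marginal of lam is the product ρ.prod ρ'
  set π : Measure (Z × Z') := lam.map (fun p => (p.1, p.2.1)) with hπdef
  have hπfunm : Measurable (fun p : Z × Z' × Y => (p.1, p.2.1)) :=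
    measurable_fst.prodMk (measurable_fst.comp measurable_snd)
  haveI : IsProbabilityMeasure π := Measure.isProbabilityMeasure_map hπfunm.aemeasurable
  have hπinv : MeasurePreserving T₀ π π := by
    refine ⟨hT₀, ?_⟩
    rw [hπdef, Measure.map_map hT₀ hπfunm]
    have : T₀ ∘ (fun p : Z × Z' × Y => (p.1, p.2.1))
        = (fun p : Z × Z' × Y => (p.1, p.2.1)) ∘ T := rfl
    rw [this, ← Measure.map_map hπfunm hTm, hinv.map_eq]
  have hπfst : π.map Prod.fst = ρ := by
    rw [hπdef, Measure.map_map measurable_fst hπfunm]; exact h1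
  have hπsnd : π.map Prod.snd = ρ' := by
    rw [hπdef, Measure.map_map measurable_snd hπfunm]; exact h2
  have hπm : π = m := hdisj π inferInstance hπinv hπfst hπsnd
  -- Step 2: m is ergodic under T₀
  have hergm : Ergodic T₀ m := by
    refine ⟨hmT₀, ⟨fun s hs hsinv => ?_⟩⟩
    rw [Filter.eventuallyConst_set']
    by_cases h0 : m s = 0
    · exact Or.inl (ae_eq_empty.mpr h0)
    · right
      have hmsne : m s ≠ ∞ := (measure_lt_top m s).ne
      have hrestinv : (m.restrict s).map T₀ = m.restrict s := by
        have := hmT₀.restrict_preimage hs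
        rw [hsinv] at this
        exact this.map_eq
      have hκle1 : (m.restrict s).map Prod.fst ≤ ρ := by
        rw [← hmfst]
        exact Measure.map_mono Measure.restrict_le_self measurable_fst
      have hκle2 : (m.restrict s).map Prod.snd ≤ ρ' := by
        rw [← hmsnd]
        exact Measure.map_mono Measure.restrict_le_self measurable_snd
      have hκinv1 : ((m.restrict s).map Prod.fst).map R = (m.restrict s).map Prod.fst := by
        conv_rhs => rw [← hrestinv]
        rw [Measure.map_map hRm measurable_fst,
          show R ∘ (Prod.fst : Z × Z' → Z) = Prod.fst ∘ T₀ from rfl,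
          Measure.map_map measurable_fst hT₀]
      have hκinv2 : ((m.restrict s).map Prod.snd).map R' = (m.restrict s).map Prod.snd := by
        conv_rhs => rw [← hrestinv]
        rw [Measure.map_map hR'm measurable_snd,
          show R' ∘ (Prod.snd : Z × Z' → Z') = Prod.snd ∘ T₀ from rfl,
          Measure.map_map measurable_snd hT₀]
      have hκuniv1 : ((m.restrict s).map Prod.fst) Set.univ = m s := by
        rw [Measure.map_apply measurable_fst MeasurableSet.univ, Set.preimage_univ,
          Measure.restrict_apply MeasurableSet.univ, Set.univ_inter]
      have hκuniv2 : ((m.restrict s).map Prod.snd) Set.univ = m s := by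
        rw [Measure.map_apply measurable_snd MeasurableSet.univ, Set.preimage_univ,
          Measure.restrict_apply MeasurableSet.univ, Set.univ_inter]
      have hκ1 : (m.restrict s).map Prod.fst = m s • ρ := by
        have h := invariant_le_ergodic hR hκle1 hκinv1
        rwa [hκuniv1] at h
      have hκ2 : (m.restrict s).map Prod.snd = m s • ρ' := by
        have h := invariant_le_ergodic hR' hκle2 hκinv2
        rwa [hκuniv2] at h
      set πs : Measure (Z × Z') := (m s)⁻¹ • m.restrict s with hπsdef
      haveI : IsProbabilityMeasure πs := by
        constructor
        rw [hπsdef, Measure.smul_apply, smul_eq_mul,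
          Measure.restrict_apply MeasurableSet.univ, Set.univ_inter]
        exact ENNReal.inv_mul_cancel h0 hmsne
      have hπsinv : MeasurePreserving T₀ πs πs := by
        refine ⟨hT₀, ?_⟩
        rw [hπsdef, Measure.map_smul, hrestinv]
      have hπsfst : πs.map Prod.fst = ρ := by
        rw [hπsdef, Measure.map_smul, hκ1, smul_smul, ENNReal.inv_mul_cancel h0 hmsne, one_smul]
      have hπssnd : πs.map Prod.snd = ρ' := by
        rw [hπsdef, Measure.map_smul, hκ2, smul_smul, ENNReal.inv_mul_cancel h0 hmsne, one_smul]
      have hπsm : πs = m := hdisj πs inferInstance hπsinv hπsfst hπssnd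
      have hms1 : m s = 1 := by
        have : πs s = m s := by rw [hπsm]
        rw [hπsdef, Measure.smul_apply, smul_eq_mul, Measure.restrict_apply hs,
          Set.inter_self, ENNReal.inv_mul_cancel h0 hmsne] at this
        exact this.symm
      rw [ae_eq_univ]
      rwa [prob_compl_eq_zero_iff hs]
  -- Step 3: the joining of the ergodic system with the identity system is the product
  set η : Measure ((Z × Z') × Y) := lam.map ψ with hηdef
  haveI : IsProbabilityMeasure η := Measure.isProbabilityMeasure_map hψ.aemeasurable
  have hηinv : MeasurePreserving S η η := by
    refine ⟨hS, ?_⟩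
    rw [hηdef, Measure.map_map hS hψ]
    have : S ∘ ψ = ψ ∘ T := rfl
    rw [this, ← Measure.map_map hψ hTm, hinv.map_eq]
  have hηfst : η.map Prod.fst = m := by
    rw [hηdef, Measure.map_map measurable_fst hψ, ← hπm, hπdef]; rfl
  have hηsnd : η.map Prod.snd = ν := by
    rw [hηdef, Measure.map_map measurable_snd hψ]; exact h3
  have hηprod : η = m.prod ν := by
    refine (Measure.prod_eq fun A B hA hB => ?_).symm
    set κB : Measure (Z × Z') := (η.restrict (Set.univ ×ˢ B)).map Prod.fst with hκBdef
    have huB : MeasurableSet (Set.univ ×ˢ B : Set ((Z × Z') × Y)) :=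
      MeasurableSet.univ.prod hB
    have hrestinv : (η.restrict (Set.univ ×ˢ B)).map S = η.restrict (Set.univ ×ˢ B) := by
      have hpre : S ⁻¹' (Set.univ ×ˢ B) = Set.univ ×ˢ B := by
        rw [hSdef, Set.preimage_prod_map_prod]
        simp
      have := hηinv.restrict_preimage huB
      rw [hpre] at this
      exact this.map_eq
    have hκBinv : κB.map T₀ = κB := by
      rw [hκBdef, Measure.map_map hT₀ measurable_fst]
      have : T₀ ∘ (Prod.fst : (Z × Z') × Y → Z × Z') = Prod.fst ∘ S := rfl
      rw [this, ← Measure.map_map measurable_fst hS, hrestinv]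
    have hκBle : κB ≤ m := by
      rw [← hηfst]
      exact Measure.map_mono Measure.restrict_le_self measurable_fst
    have hκB := invariant_le_ergodic hergm hκBle hκBinv
    have hκBuniv : κB Set.univ = ν B := by
      rw [hκBdef, Measure.map_apply measurable_fst MeasurableSet.univ, Set.preimage_univ,
        Measure.restrict_apply MeasurableSet.univ, Set.univ_inter, ← hηsnd,
        Measure.map_apply measurable_snd hB]
      congr 1
      ext x
      simp [Set.mem_prod]
    have hκBA : κB A = η (A ×ˢ B) := by
      rw [hκBdef, Measure.map_apply measurable_fst hA, Measure.restrict_apply (hA.preimage measurable_fst)]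
      congr 1
      ext x
      simp [Set.mem_prod]
    rw [← hκBA, hκB, hκBuniv, Measure.smul_apply, smul_eq_mul, mul_comm]
  -- Conclude
  have hlam : lam = η.map (MeasurableEquiv.prodAssoc : (Z × Z') × Y ≃ᵐ Z × Z' × Y) := by
    rw [hηdef, Measure.map_map MeasurableEquiv.prodAssoc.measurable hψ]
    have : (⇑(MeasurableEquiv.prodAssoc : (Z × Z') × Y ≃ᵐ Z × Z' × Y)) ∘ ψ = id := rfl
    rw [this, Measure.map_id]
  rw [hlam, hηprod, hmdef]
  exact (measurePreserving_prodAssoc ρ ρ' ν).map_eq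
end

section
/- If a system (X,μ,T) is disjoint from an ergodic system (Z,ρ,R) and (Y,ν,Id) is an identity, then for any joining λ of T with Id, the system (X × Y, λ, T × Id) is disjoint from (Z,ρ,R). -/
open MeasureTheory Set

/-- An invariant measure dominated by an ergodic probability measure is a multiple of it. -/
lemma ergodic_smul_of_le {Z : Type*} [MeasurableSpace Z] {ρ : Measure Z}
    [IsProbabilityMeasure ρ] {R : Z → Z} (hR : Ergodic R ρ) (m : Measure Z)
    (hle : m ≤ ρ) (hinv : m.map R = m) : m = (m Set.univ) • ρ := by
  have hRm : Measurable R := hR.toMeasurePreserving.measurable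
  haveI : IsFiniteMeasure m := isFiniteMeasure_of_le ρ hle
  have hac : m ≪ ρ := Measure.absolutelyContinuous_of_le hle
  set g : Z → ℝ := fun z => (m.rnDeriv ρ z).toReal with hg
  have hgm : Measurable g := (Measure.measurable_rnDeriv m ρ).ennreal_toReal
  have hg0 : ∀ z, 0 ≤ g z := fun z => ENNReal.toReal_nonneg
  have hd1 : m.rnDeriv ρ ≤ᵐ[ρ] 1 := Measure.rnDeriv_le_one_of_le hle
  have hg1 : ∀ᵐ z ∂ρ, g z ≤ 1 := by
    filter_upwards [hd1] with z hz
    simpa [g] using ENNReal.toReal_le_of_le_ofReal zero_le_one (by simpa using hz)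
  -- integrability of bounded measurable functions
  have hbound : ∀ (h : Z → ℝ), Measurable h → (∀ᵐ z ∂ρ, ‖h z‖ ≤ 1) → Integrable h ρ := by
    intro h hm hb
    exact (integrable_const (1:ℝ)).mono' hm.aestronglyMeasurable hb
  have hgint : Integrable g ρ := by
    refine hbound g hgm ?_
    filter_upwards [hg1] with z hz
    rw [Real.norm_eq_abs, abs_of_nonneg (hg0 z)]; exact hz
  have hmp : MeasurePreserving R m m := ⟨hRm, hinv⟩
  -- key identity : ∫ g∘R * g dρ = ∫ g * g dρ
  have hint_m : ∀ (h : Z → ℝ), Measurable h → ∫ z, g z * h z ∂ρ = ∫ z, h z ∂m := by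
    intro h hm
    have := integral_rnDeriv_smul (μ := m) (ν := ρ) hac (f := h)
    simpa [g, smul_eq_mul] using this
  have hcompR : ∀ (h : Z → ℝ), Measurable h → ∫ z, h (R z) ∂m = ∫ z, h z ∂m := by
    intro h hm
    conv_rhs => rw [← hinv]
    rw [integral_map hRm.aemeasurable hm.aestronglyMeasurable]
  have hcompRρ : ∀ (h : Z → ℝ), Measurable h → ∫ z, h (R z) ∂ρ = ∫ z, h z ∂ρ := by
    intro h hm
    conv_rhs => rw [← hR.toMeasurePreserving.map_eq]
    rw [integral_map hRm.aemeasurable hm.aestronglyMeasurable]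
  have key1 : ∫ z, g z * g (R z) ∂ρ = ∫ z, g z * g z ∂ρ := by
    rw [hint_m (fun z => g (R z)) (hgm.comp hRm), hint_m g hgm, hcompR g hgm]
  have key2 : ∫ z, g (R z) * g (R z) ∂ρ = ∫ z, g z * g z ∂ρ :=
    hcompRρ (fun z => g z * g z) (hgm.mul hgm)
  -- ∫ (g - g∘R)^2 = 0
  have hboundC : ∀ (h : Z → ℝ) (c : ℝ), Measurable h → (∀ᵐ z ∂ρ, ‖h z‖ ≤ c) →
      Integrable h ρ := by
    intro h c hm hb
    exact (integrable_const (c:ℝ)).mono' hm.aestronglyMeasurable hb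
  have hgR1 : ∀ᵐ z ∂ρ, g (R z) ≤ 1 := by
    have hms : MeasurableSet {z : Z | g z ≤ 1} := hgm measurableSet_Iic
    have h' := hg1
    rw [← hR.toMeasurePreserving.map_eq] at h'
    exact (ae_map_iff hRm.aemeasurable hms).mp h'
  have habs : ∀ᵐ z ∂ρ, |g z| ≤ 1 ∧ |g (R z)| ≤ 1 := by
    filter_upwards [hg1, hgR1] with z h1 h2
    constructor <;> rw [abs_of_nonneg (hg0 _)] <;> assumption
  have i1 : Integrable (fun z => g z * g z) ρ := by
    refine hboundC _ 1 (hgm.mul hgm) ?_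
    filter_upwards [habs] with z hz
    rw [Real.norm_eq_abs, abs_mul]
    exact mul_le_one₀ hz.1 (abs_nonneg _) hz.1
  have i2 : Integrable (fun z => g z * g (R z)) ρ := by
    refine hboundC _ 1 (hgm.mul (hgm.comp hRm)) ?_
    filter_upwards [habs] with z hz
    rw [Real.norm_eq_abs, abs_mul]
    exact mul_le_one₀ hz.1 (abs_nonneg _) hz.2
  have i3 : Integrable (fun z => g (R z) * g (R z)) ρ := by
    refine hboundC _ 1 ((hgm.comp hRm).mul (hgm.comp hRm)) ?_
    filter_upwards [habs] with z hz
    rw [Real.norm_eq_abs, abs_mul]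
    exact mul_le_one₀ hz.2 (abs_nonneg _) hz.2
  have iB : Integrable (fun z => g z * g (R z) - g (R z) * g (R z)) ρ := by
    refine hboundC _ 2 ((hgm.mul (hgm.comp hRm)).sub ((hgm.comp hRm).mul (hgm.comp hRm))) ?_
    filter_upwards [habs] with z hz
    have h1 : |g z * g (R z)| ≤ 1 := by
      rw [abs_mul]; exact mul_le_one₀ hz.1 (abs_nonneg _) hz.2
    have h2 : |g (R z) * g (R z)| ≤ 1 := by
      rw [abs_mul]; exact mul_le_one₀ hz.2 (abs_nonneg _) hz.2
    rw [Real.norm_eq_abs]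
    calc |g z * g (R z) - g (R z) * g (R z)| ≤ |g z * g (R z)| + |g (R z) * g (R z)| :=
          abs_sub _ _
      _ ≤ 2 := by linarith
  have iA : Integrable (fun z => g z * g (R z) + (g z * g (R z) - g (R z) * g (R z))) ρ := by
    refine hboundC _ 3 ((hgm.mul (hgm.comp hRm)).add
      ((hgm.mul (hgm.comp hRm)).sub ((hgm.comp hRm).mul (hgm.comp hRm)))) ?_
    filter_upwards [habs] with z hz
    have h1 : |g z * g (R z)| ≤ 1 := by
      rw [abs_mul]; exact mul_le_one₀ hz.1 (abs_nonneg _) hz.2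
    have h2 : |g (R z) * g (R z)| ≤ 1 := by
      rw [abs_mul]; exact mul_le_one₀ hz.2 (abs_nonneg _) hz.2
    rw [Real.norm_eq_abs]
    calc |g z * g (R z) + (g z * g (R z) - g (R z) * g (R z))|
        ≤ |g z * g (R z)| + |g z * g (R z) - g (R z) * g (R z)| := abs_add_le _ _
      _ ≤ |g z * g (R z)| + (|g z * g (R z)| + |g (R z) * g (R z)|) := by
          linarith [abs_sub (g z * g (R z)) (g (R z) * g (R z))]
      _ ≤ 3 := by linarith
  have iS : Integrable (fun z => (g z - g (R z))^2) ρ := by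
    refine hboundC _ 4 ((hgm.sub (hgm.comp hRm)).pow_const 2) ?_
    filter_upwards [habs] with z hz
    have hd : |g z - g (R z)| ≤ 2 := by
      calc |g z - g (R z)| ≤ |g z| + |g (R z)| := abs_sub _ _
        _ ≤ 2 := by linarith [hz.1, hz.2]
    rw [Real.norm_eq_abs, abs_pow]
    calc |g z - g (R z)| ^ 2 ≤ 2 ^ 2 := by
          exact pow_le_pow_left₀ (abs_nonneg _) hd 2
      _ = 4 := by norm_num
  have hzero : ∫ z, (g z - g (R z))^2 ∂ρ = 0 := by
    have h1 : ∫ z, (g z - g (R z))^2 ∂ρ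
        = ∫ z, (g z * g z - (g z * g (R z) + (g z * g (R z) - g (R z) * g (R z)))) ∂ρ :=
      integral_congr_ae (Filter.Eventually.of_forall fun z => by ring)
    rw [h1, integral_sub i1 iA, integral_add i2 iB, integral_sub i2 i3, key1, key2]
    ring
  have hae : (fun z => (g z - g (R z))^2) =ᵐ[ρ] 0 := by
    have hnn : 0 ≤ᵐ[ρ] fun z => (g z - g (R z))^2 :=
      Filter.Eventually.of_forall fun z => sq_nonneg _
    exact (integral_eq_zero_iff_of_nonneg_ae hnn iS).mp hzero
  have hinvg : g ∘ R =ᵐ[ρ] g := by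
    filter_upwards [hae] with z hz
    have : (g z - g (R z))^2 = 0 := hz
    have := pow_eq_zero_iff (n := 2) (by norm_num) |>.mp this
    simp only [Function.comp_apply]
    linarith [sub_eq_zero.mp this]
  obtain ⟨c, hc⟩ := hR.ae_eq_const_of_ae_eq_comp₀ hgm.nullMeasurable hinvg
  -- conclude
  have hval : ∀ B, MeasurableSet B → (m B).toReal = c * (ρ B).toReal := by
    intro B hB
    have h1 : ∫ z in B, g z ∂ρ = (m B).toReal := Measure.setIntegral_toReal_rnDeriv hac B
    have h2 : ∫ z in B, g z ∂ρ = ∫ z in B, c ∂ρ :=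
      setIntegral_congr_ae hB (hc.mono fun z hz _ => hz)
    rw [setIntegral_const] at h2
    rw [← h1, h2, smul_eq_mul, mul_comm]; rfl
  have hc_eq : c = (m univ).toReal := by
    have := hval univ MeasurableSet.univ
    simpa using this.symm
  ext B hB
  have h := hval B hB
  rw [hc_eq] at h
  have hfin1 : m B ≠ ⊤ := measure_ne_top m B
  have hfin2 : m univ * ρ B ≠ ⊤ := ENNReal.mul_ne_top (measure_ne_top m _) (measure_ne_top ρ _)
  rw [Measure.smul_apply, smul_eq_mul]
  refine (ENNReal.toReal_eq_toReal_iff' hfin1 hfin2).mp ?_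
  rw [ENNReal.toReal_mul, h]

section AuxHelpers

variable {W : Type*} [MeasurableSpace W]

/-- A measure-preserving map leaves the restriction to an invariant set invariant. -/
lemma map_restrict_invariant {ψ : Measure W} {S : W → W} (hS : MeasurePreserving S ψ ψ)
    {G : Set W} (hG : MeasurableSet G) (hSG : S ⁻¹' G = G) :
    (ψ.restrict G).map S = ψ.restrict G := by
  ext B hB
  rw [Measure.map_apply hS.measurable hB, Measure.restrict_apply hB,
    Measure.restrict_apply (hS.measurable hB)]
  conv_lhs => rw [← hSG]
  rw [← Set.preimage_inter, hS.measure_preimage (hB.inter hG).nullMeasurableSet]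

/-- Cancellation of a finite measure in a sum of measures. -/
lemma measure_add_right_cancel {m₁ m₂ κ : Measure W} [IsFiniteMeasure κ]
    (h : m₁ + κ = m₂ + κ) : m₁ = m₂ := by
  ext s hs
  have h' := congrArg (fun m : Measure W => m s) h
  simp only [Measure.add_apply] at h'
  exact WithTop.add_right_cancel (measure_ne_top κ s) h'

end AuxHelpers

/-- If a system `(X, μ, T)` is disjoint from an ergodic system
`(Z, ρ, R)` and `(Y, ν, Id)` is an identity, then for any joining `λ` of `T` with `Id`,
the system `(X × Y, λ, T × Id)` is disjoint from `(Z, ρ, R)`. -/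
theorem joining_with_identity_disjoint_from_ergodic
    {X Y Z : Type*} [MeasurableSpace X] [MeasurableSpace Y] [MeasurableSpace Z]
    (μ : Measure X) (ν : Measure Y) (ρ : Measure Z)
    [IsProbabilityMeasure μ] [IsProbabilityMeasure ν] [IsProbabilityMeasure ρ]
    (T : X → X) (R : Z → Z)
    (hT : MeasurePreserving T μ μ) (hR : Ergodic R ρ)
    (hdisj : ∀ π : Measure (X × Z), IsProbabilityMeasure π →
      MeasurePreserving (Prod.map T R) π π →
      π.map Prod.fst = μ → π.map Prod.snd = ρ → π = μ.prod ρ)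
    -- `lam` is a joining of `T` with the identity on `(Y, ν)`
    (lam : Measure (X × Y)) [IsProbabilityMeasure lam]
    (hlaminv : MeasurePreserving (Prod.map T (id : Y → Y)) lam lam)
    (hlam1 : lam.map Prod.fst = μ) (hlam2 : lam.map Prod.snd = ν)
    -- `ψ` is any joining of `(X × Y, λ, T × Id)` with `(Z, ρ, R)`
    (ψ : Measure ((X × Y) × Z)) [IsProbabilityMeasure ψ]
    (hψinv : MeasurePreserving (Prod.map (Prod.map T (id : Y → Y)) R) ψ ψ)
    (hψ1 : ψ.map Prod.fst = lam) (hψ2 : ψ.map Prod.snd = ρ) :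
    ψ = lam.prod ρ := by
  have hTm : Measurable T := hT.measurable
  have hRm : Measurable R := hR.toMeasurePreserving.measurable
  have hF : Measurable (Prod.map T R) := hTm.prodMap hRm
  set S : (X × Y) × Z → (X × Y) × Z := Prod.map (Prod.map T (id : Y → Y)) R with hS
  have hSm : Measurable S := (hTm.prodMap measurable_id).prodMap hRm
  set pr : (X × Y) × Z → X × Z := fun p => (p.1.1, p.2) with hpr
  have hprm : Measurable pr := (measurable_fst.comp measurable_fst).prodMk measurable_snd
  have hcomm : (Prod.map T R) ∘ pr = pr ∘ S := by
    funext p; rfl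
  -- values of ψ and lam on cylinder sets
  have hψlam : ∀ {E : Set (X × Y)}, MeasurableSet E → ψ (E ×ˢ (univ : Set Z)) = lam E := by
    intro E hE
    rw [← hψ1, Measure.map_apply measurable_fst hE]
    congr 1
    ext ⟨⟨x, y⟩, z⟩; simp
  have hψρ : ∀ {B : Set Z}, MeasurableSet B → ψ ((univ : Set (X × Y)) ×ˢ B) = ρ B := by
    intro B hB
    rw [← hψ2, Measure.map_apply measurable_snd hB]
    congr 1
    ext ⟨⟨x, y⟩, z⟩; simp
  have hlamμ : ∀ {A : Set X}, MeasurableSet A → lam (A ×ˢ (univ : Set Y)) = μ A := by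
    intro A hA
    rw [← hlam1, Measure.map_apply measurable_fst hA]
    congr 1
    ext ⟨x, y⟩; simp
  have hlamν : ∀ {C : Set Y}, MeasurableSet C → lam ((univ : Set X) ×ˢ C) = ν C := by
    intro C hC
    rw [← hlam2, Measure.map_apply measurable_snd hC]
    congr 1
    ext ⟨x, y⟩; simp
  -- Step 2 : ψ ((univ ×ˢ C) ×ˢ B) = ν C * ρ B (uses ergodicity of R)
  have step2 : ∀ {C : Set Y} {B : Set Z}, MeasurableSet C → MeasurableSet B →
      ψ (((univ : Set X) ×ˢ C) ×ˢ B) = ν C * ρ B := by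
    intro C B hC hB
    set G : Set ((X × Y) × Z) := ((univ : Set X) ×ˢ C) ×ˢ (univ : Set Z) with hGdef
    have hG : MeasurableSet G := (MeasurableSet.univ.prod hC).prod MeasurableSet.univ
    have hSG : S ⁻¹' G = G := by
      ext ⟨⟨x, y⟩, z⟩; simp [hGdef, hS]
    set mC : Measure Z := (ψ.restrict G).map Prod.snd with hmC
    have hmCval : ∀ {B' : Set Z}, MeasurableSet B' →
        mC B' = ψ (((univ : Set X) ×ˢ C) ×ˢ B') := by
      intro B' hB'
      rw [hmC, Measure.map_apply measurable_snd hB', Measure.restrict_apply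
        (measurable_snd hB')]
      congr 1
      ext ⟨⟨x, y⟩, z⟩; simp [hGdef]; try tauto
    have hle : mC ≤ ρ := by
      rw [Measure.le_iff]
      intro B' hB'
      rw [hmCval hB', ← hψρ hB']
      exact measure_mono (by intro ⟨⟨x, y⟩, z⟩; simp; try tauto)
    have hinv : mC.map R = mC := by
      rw [hmC, Measure.map_map hRm measurable_snd]
      have h2 : R ∘ Prod.snd = (Prod.snd : (X × Y) × Z → Z) ∘ S := by funext p; rfl
      rw [h2, ← Measure.map_map measurable_snd hSm,
        map_restrict_invariant hψinv hG hSG]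
    have hmCsmul := ergodic_smul_of_le hR mC hle hinv
    have huniv : mC univ = ν C := by
      rw [hmCval MeasurableSet.univ, hψlam (MeasurableSet.univ.prod hC), hlamν hC]
    rw [← hmCval hB, hmCsmul, huniv, Measure.smul_apply, smul_eq_mul]
  -- Step 3 : core rectangle identity (uses disjointness)
  have step3 : ∀ {A : Set X} {C : Set Y} {B : Set Z},
      MeasurableSet A → MeasurableSet C → MeasurableSet B →
      ψ ((A ×ˢ C) ×ˢ B) = lam (A ×ˢ C) * ρ B := by
    intro A C B hA hC hB
    set G : Set ((X × Y) × Z) := ((univ : Set X) ×ˢ C) ×ˢ (univ : Set Z) with hGdef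
    have hG : MeasurableSet G := (MeasurableSet.univ.prod hC).prod MeasurableSet.univ
    have hSG : S ⁻¹' G = G := by
      ext ⟨⟨x, y⟩, z⟩; simp [hGdef, hS]
    set ψC : Measure (X × Z) := (ψ.restrict G).map pr with hψC
    have hψCval : ∀ {A' : Set X} {B' : Set Z}, MeasurableSet A' → MeasurableSet B' →
        ψC (A' ×ˢ B') = ψ ((A' ×ˢ C) ×ˢ B') := by
      intro A' B' hA' hB'
      rw [hψC, Measure.map_apply hprm (hA'.prod hB'), Measure.restrict_apply
        (hprm (hA'.prod hB'))]
      congr 1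
      ext ⟨⟨x, y⟩, z⟩; simp [hGdef, hpr]; try tauto
    set lamC : Measure X := (lam.restrict ((univ : Set X) ×ˢ C)).map Prod.fst with hlamC
    have hlamCval : ∀ {A' : Set X}, MeasurableSet A' → lamC A' = lam (A' ×ˢ C) := by
      intro A' hA'
      rw [hlamC, Measure.map_apply measurable_fst hA', Measure.restrict_apply
        (measurable_fst hA')]
      congr 1
      ext ⟨x, y⟩; simp
    have hlamCle : lamC ≤ μ := by
      rw [Measure.le_iff]
      intro A' hA'
      rw [hlamCval hA', ← hlamμ hA']
      exact measure_mono (by intro ⟨x, y⟩; simp; try tauto)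
    haveI : IsFiniteMeasure lamC := isFiniteMeasure_of_le μ hlamCle
    have hlamCinv : MeasurePreserving T lamC lamC := by
      refine ⟨hTm, ?_⟩
      ext A' hA'
      rw [Measure.map_apply hTm hA', hlamCval (hTm hA'), hlamCval hA']
      have h3 : (T ⁻¹' A') ×ˢ C = (Prod.map T (id : Y → Y)) ⁻¹' (A' ×ˢ C) := by
        ext ⟨x, y⟩; simp
      rw [h3, hlaminv.measure_preimage (hA'.prod hC).nullMeasurableSet]
    set κ : Measure (X × Z) := lamC.prod ρ with hκ
    have hκle : κ ≤ μ.prod ρ := by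
      rw [Measure.le_iff]
      intro s hs
      rw [hκ, Measure.prod_apply hs, Measure.prod_apply hs]
      exact lintegral_mono' hlamCle le_rfl
    haveI : IsFiniteMeasure κ := isFiniteMeasure_of_le _ hκle
    have hκinv : MeasurePreserving (Prod.map T R) κ κ :=
      hlamCinv.prod hR.toMeasurePreserving
    have hψCinv : MeasurePreserving (Prod.map T R) ψC ψC := by
      refine ⟨hF, ?_⟩
      rw [hψC, Measure.map_map hF hprm]
      rw [show (Prod.map T R) ∘ pr = pr ∘ S from hcomm]
      rw [← Measure.map_map hprm hSm, map_restrict_invariant hψinv hG hSG]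
    -- marginals of ψC
    have hψCfst : ψC.map Prod.fst = lamC := by
      ext A' hA'
      rw [Measure.map_apply measurable_fst hA', hψC,
        Measure.map_apply hprm (measurable_fst hA'),
        Measure.restrict_apply (hprm (measurable_fst hA')), hlamCval hA',
        ← hψlam (hA'.prod hC)]
      congr 1
      ext ⟨⟨x, y⟩, z⟩; simp [hGdef, hpr]; try tauto
    have hψCsnd : ψC.map Prod.snd = (ν C) • ρ := by
      ext B' hB'
      rw [Measure.map_apply measurable_snd hB', hψC,
        Measure.map_apply hprm (measurable_snd hB'),
        Measure.restrict_apply (hprm (measurable_snd hB'))]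
      have h4 : pr ⁻¹' (Prod.snd ⁻¹' B') ∩ G = ((univ : Set X) ×ˢ C) ×ˢ B' := by
        ext ⟨⟨x, y⟩, z⟩; simp [hGdef, hpr]; try tauto
      rw [h4, step2 hC hB', Measure.smul_apply, smul_eq_mul]
    -- the perturbed joining
    set π' : Measure (X × Z) := ψC + (μ.prod ρ - κ) with hπ'
    have hsum : π' + κ = ψC + μ.prod ρ := by
      rw [hπ', add_assoc, Measure.sub_add_cancel_of_le hκle]
    have hκuniv : κ univ = ν C := by
      rw [hκ, ← univ_prod_univ, Measure.prod_prod,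
        (measure_univ : ρ univ = 1), mul_one, hlamCval MeasurableSet.univ, hlamν hC]
    have hψCuniv : ψC univ = ν C := by
      rw [← univ_prod_univ, hψCval MeasurableSet.univ MeasurableSet.univ,
        hψlam (MeasurableSet.univ.prod hC), hlamν hC]
    have hπ'univ : π' univ = 1 := by
      have h := congrArg (fun m : Measure (X × Z) => m univ) hsum
      simp only [Measure.add_apply] at h
      rw [hκuniv, hψCuniv, (measure_univ : (μ.prod ρ) univ = 1), add_comm (ν C) 1] at h
      exact WithTop.add_right_cancel (measure_ne_top ν C) h
    haveI hπ'prob : IsProbabilityMeasure π' := ⟨hπ'univ⟩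
    have hπ'inv : MeasurePreserving (Prod.map T R) π' π' := by
      refine ⟨hF, ?_⟩
      refine measure_add_right_cancel (κ := κ) ?_
      calc π'.map (Prod.map T R) + κ
          = π'.map (Prod.map T R) + κ.map (Prod.map T R) := by rw [hκinv.map_eq]
        _ = (π' + κ).map (Prod.map T R) := (Measure.map_add _ _ hF).symm
        _ = (ψC + μ.prod ρ).map (Prod.map T R) := by rw [hsum]
        _ = ψC.map (Prod.map T R) + (μ.prod ρ).map (Prod.map T R) := Measure.map_add _ _ hF
        _ = ψC + μ.prod ρ := by
            rw [hψCinv.map_eq, (hT.prod hR.toMeasurePreserving).map_eq]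
        _ = π' + κ := hsum.symm
    have hκfst : κ.map Prod.fst = lamC := by
      rw [hκ, Measure.map_fst_prod, (measure_univ : ρ univ = 1), one_smul]
    have hκsnd : κ.map Prod.snd = (ν C) • ρ := by
      rw [hκ, Measure.map_snd_prod, hlamCval MeasurableSet.univ, hlamν hC]
    have hπ'fst : π'.map Prod.fst = μ := by
      refine measure_add_right_cancel (κ := lamC) ?_
      calc π'.map Prod.fst + lamC
          = π'.map Prod.fst + κ.map Prod.fst := by rw [hκfst]
        _ = (π' + κ).map Prod.fst := (Measure.map_add _ _ measurable_fst).symm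
        _ = (ψC + μ.prod ρ).map Prod.fst := by rw [hsum]
        _ = ψC.map Prod.fst + (μ.prod ρ).map Prod.fst := Measure.map_add _ _ measurable_fst
        _ = lamC + μ := by
            rw [hψCfst, Measure.map_fst_prod, (measure_univ : ρ univ = 1), one_smul]
        _ = μ + lamC := add_comm _ _
    haveI : IsFiniteMeasure ((ν C) • ρ) := by
      constructor
      rw [Measure.smul_apply, smul_eq_mul, (measure_univ : ρ univ = 1), mul_one]
      exact measure_lt_top ν C
    have hπ'snd : π'.map Prod.snd = ρ := by
      refine measure_add_right_cancel (κ := (ν C) • ρ) ?_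
      calc π'.map Prod.snd + (ν C) • ρ
          = π'.map Prod.snd + κ.map Prod.snd := by rw [hκsnd]
        _ = (π' + κ).map Prod.snd := (Measure.map_add _ _ measurable_snd).symm
        _ = (ψC + μ.prod ρ).map Prod.snd := by rw [hsum]
        _ = ψC.map Prod.snd + (μ.prod ρ).map Prod.snd := Measure.map_add _ _ measurable_snd
        _ = (ν C) • ρ + ρ := by
            rw [hψCsnd, Measure.map_snd_prod, (measure_univ : μ univ = 1), one_smul]
        _ = ρ + (ν C) • ρ := add_comm _ _
    have hπ'eq : π' = μ.prod ρ := hdisj π' hπ'prob hπ'inv hπ'fst hπ'snd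
    have hψCκ : ψC = κ := by
      refine measure_add_right_cancel (κ := μ.prod ρ - κ) ?_
      rw [← hπ', hπ'eq, add_comm κ _, Measure.sub_add_cancel_of_le hκle]
    rw [← hψCval hA hB, hψCκ, hκ, Measure.prod_prod, hlamCval hA]
  -- Step 4 : extend to all measurable E ⊆ X × Y
  have step4 : ∀ {E : Set (X × Y)} {B : Set Z}, MeasurableSet E → MeasurableSet B →
      ψ (E ×ˢ B) = lam E * ρ B := by
    intro E B hE hB
    set νB : Measure (X × Y) := (ψ.restrict ((univ : Set (X × Y)) ×ˢ B)).map Prod.fst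
      with hνB
    have hνBval : ∀ {E' : Set (X × Y)}, MeasurableSet E' → νB E' = ψ (E' ×ˢ B) := by
      intro E' hE'
      rw [hνB, Measure.map_apply measurable_fst hE',
        Measure.restrict_apply (measurable_fst hE')]
      congr 1
      ext ⟨⟨x, y⟩, z⟩; simp; try tauto
    haveI : IsFiniteMeasure νB := by
      constructor
      rw [hνBval MeasurableSet.univ]
      exact measure_lt_top ψ _
    have hνBeq : νB = (ρ B) • lam := by
      refine ext_of_generate_finite _ generateFrom_prod.symm isPiSystem_prod ?_ ?_
      · rintro s ⟨A, hA, C, hC, rfl⟩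
        rw [hνBval ((hA : MeasurableSet A).prod (hC : MeasurableSet C)),
          step3 hA hC hB, Measure.smul_apply, smul_eq_mul, mul_comm]
      · rw [hνBval MeasurableSet.univ, ← univ_prod_univ,
          step3 MeasurableSet.univ MeasurableSet.univ hB, univ_prod_univ,
          (measure_univ : lam univ = 1), one_mul, Measure.smul_apply, smul_eq_mul,
          (measure_univ : lam univ = 1), mul_one]
    rw [← hνBval hE, hνBeq, Measure.smul_apply, smul_eq_mul, mul_comm]
  exact ((Measure.prod_eq fun E B hE hB => step4 hE hB)).symm
end

section
/- Let X be a compact metric space, T : X → X a homeomorphism, and f ∈ C(X) with |f| = 1. Then the map F from the space of T-invariant Borel probability measures on X (with the weak* topology) to the space of Borel probability measures on the circle (weak* topology), sending η to the spectral measure σ_{f,η}, is continuous. -/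
open MeasureTheory
open scoped ComplexConjugate

section Aux
open Filter Topology

variable {Y : Type*} [MetricSpace Y] [CompactSpace Y] [MeasurableSpace Y] [BorelSpace Y]

lemma aux_integrable (g : C(Y, ℂ)) (μ : Measure Y) [IsProbabilityMeasure μ] :
    Integrable g μ :=
  g.continuous.integrable_of_hasCompactSupport (HasCompactSupport.of_compactSpace _)

/-- If a net of probability measures converges weakly, integrals of complex continuous
functions converge. -/
lemma aux_tendsto_integral {ι : Type*} {l : Filter ι} {μs : ι → ProbabilityMeasure Y}
    {μ : ProbabilityMeasure Y} (h : Tendsto μs l (𝓝 μ)) (g : C(Y, ℂ)) :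
    Tendsto (fun i => ∫ y, g y ∂(μs i : Measure Y)) l (𝓝 (∫ y, g y ∂(μ : Measure Y))) := by
  have hre : Tendsto (fun i => ∫ y, (g y).re ∂(μs i : Measure Y)) l
      (𝓝 (∫ y, (g y).re ∂(μ : Measure Y))) :=
    ProbabilityMeasure.tendsto_iff_forall_integral_tendsto.mp h
      (BoundedContinuousFunction.mkOfCompact ⟨fun y => (g y).re,
        Complex.continuous_re.comp g.continuous⟩)
  have him : Tendsto (fun i => ∫ y, (g y).im ∂(μs i : Measure Y)) l
      (𝓝 (∫ y, (g y).im ∂(μ : Measure Y))) :=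
    ProbabilityMeasure.tendsto_iff_forall_integral_tendsto.mp h
      (BoundedContinuousFunction.mkOfCompact ⟨fun y => (g y).im,
        Complex.continuous_im.comp g.continuous⟩)
  have key : ∀ ν : Measure Y, IsProbabilityMeasure ν → ∫ y, g y ∂ν
      = (∫ y, (g y).re ∂ν : ℝ) + (∫ y, (g y).im ∂ν : ℝ) * Complex.I := by
    intro ν hν
    simpa using (integral_re_add_im (aux_integrable g ν)).symm
  have : Tendsto (fun i => ((∫ y, (g y).re ∂(μs i : Measure Y) : ℝ) : ℂ)
      + ((∫ y, (g y).im ∂(μs i : Measure Y) : ℝ) : ℂ) * Complex.I) l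
      (𝓝 (((∫ y, (g y).re ∂(μ : Measure Y) : ℝ) : ℂ)
        + ((∫ y, (g y).im ∂(μ : Measure Y) : ℝ) : ℂ) * Complex.I)) := by
    exact ((Complex.continuous_ofReal.tendsto _).comp hre).add
      ((((Complex.continuous_ofReal.tendsto _).comp him)).mul_const Complex.I)
  rw [key _ inferInstance]
  exact this.congr (fun i => (key _ inferInstance).symm)

/-- Conversely: if integrals of all complex continuous functions converge, measures converge. -/
lemma aux_tendsto_of_integrals {ι : Type*} {l : Filter ι} {μs : ι → ProbabilityMeasure Y}
    {μ : ProbabilityMeasure Y}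
    (h : ∀ g : C(Y, ℂ), Tendsto (fun i => ∫ y, g y ∂(μs i : Measure Y)) l
      (𝓝 (∫ y, g y ∂(μ : Measure Y)))) :
    Tendsto μs l (𝓝 μ) := by
  rw [ProbabilityMeasure.tendsto_iff_forall_integral_tendsto]
  intro g
  have := h ⟨fun y => (g y : ℂ), Complex.continuous_ofReal.comp g.continuous⟩
  simp only [ContinuousMap.coe_mk] at this
  have h1 : ∀ ν : Measure Y, ∫ y, ((g y : ℂ)) ∂ν = ((∫ y, g y ∂ν : ℝ) : ℂ) := fun ν =>
    integral_ofReal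
  simp only [h1] at this
  have := (Complex.continuous_re.tendsto _).comp this
  simpa [Function.comp_def] using this

end Aux

open Filter Topology

/-- Let `X` be a compact metric space, `T : X → X` a homeomorphism,
and `f ∈ C(X)` with `|f| = 1`. Then the map `F` from the space of `T`-invariant Borel
probability measures on `X` (weak* topology) to the probability measures on the circle
(weak* topology) sending `η` to the spectral measure `σ_{f,η}` is continuous.

Here `σ_{f,η}` is characterized by its Fourier coefficients
`σ̂_{f,η}(n) = ∫ f(x) · conj (f (Tⁿ x)) dη(x)`, `n : ℤ`; since `|f| = 1` it is a
probability measure. -/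
theorem spectral_measure_weakStar_continuous
    {X : Type*} [MetricSpace X] [CompactSpace X] [MeasurableSpace X] [BorelSpace X]
    (T : X ≃ₜ X) (f : C(X, ℂ)) (hf : ∀ x, ‖f x‖ = 1)
    (F : {η : ProbabilityMeasure X //
            MeasurePreserving T (η : Measure X) (η : Measure X)} →
          ProbabilityMeasure (AddCircle (1 : ℝ)))
    (hF : ∀ η, ∀ n : ℤ,
      ∫ z, fourier n z ∂(F η : Measure (AddCircle (1 : ℝ)))
        = ∫ x, f x * conj (f ((T.toEquiv ^ n) x)) ∂(η.1 : Measure X)) :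
    Continuous F := by
  -- continuity of x ↦ (T.toEquiv ^ n) x
  have hTn : ∀ n : ℤ, Continuous fun x => (T.toEquiv ^ n) x := by
    intro n
    induction n using Int.induction_on with
    | zero => simpa using continuous_id'
    | succ m _ =>
        have : (T.toEquiv ^ ((m : ℤ) + 1)) = T.toEquiv ^ (m + 1 : ℕ) := by
          rw [← zpow_natCast]; norm_num
        rw [this, Equiv.Perm.coe_pow]
        exact T.continuous.iterate _
    | pred m _ =>
        have : (T.toEquiv ^ (-(m : ℤ) - 1)) = (T.toEquiv⁻¹) ^ (m + 1 : ℕ) := by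
          rw [inv_pow, ← zpow_natCast, ← zpow_neg]
          congr 1; push_cast; ring
        rw [this, Equiv.Perm.coe_pow]
        exact T.symm.continuous.iterate _
  rw [continuous_iff_continuousAt]
  intro η
  unfold ContinuousAt
  apply aux_tendsto_of_integrals
  -- the set of g for which convergence holds
  set P : C(AddCircle (1 : ℝ), ℂ) → Prop := fun g =>
    Tendsto (fun η' : {η : ProbabilityMeasure X //
        MeasurePreserving T (η : Measure X) (η : Measure X)} =>
      ∫ z, g z ∂(F η' : Measure (AddCircle (1 : ℝ)))) (𝓝 η)
      (𝓝 (∫ z, g z ∂(F η : Measure (AddCircle (1 : ℝ))))) with hP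
  suffices h : ∀ g, P g by exact h
  -- step 1: P holds for fourier characters
  have hfourier : ∀ n : ℤ, P (fourier n) := by
    intro n
    rw [hP]
    simp only [hF _ n]
    have hcont : Continuous fun x => f x * conj (f ((T.toEquiv ^ n) x)) :=
      f.continuous.mul (Complex.continuous_conj.comp (f.continuous.comp (hTn n)))
    have hsub : Tendsto (fun η' : {η : ProbabilityMeasure X //
        MeasurePreserving T (η : Measure X) (η : Measure X)} => η'.1) (𝓝 η) (𝓝 η.1) :=
      continuous_subtype_val.continuousAt
    exact aux_tendsto_integral hsub ⟨_, hcont⟩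
  -- step 2: P holds on the span of fourier characters
  have hspan : ∀ g ∈ Submodule.span ℂ (Set.range (@fourier 1)), P g := by
    intro g hg
    induction hg using Submodule.span_induction with
    | mem g hg => obtain ⟨n, rfl⟩ := hg; exact hfourier n
    | zero => simpa [hP] using tendsto_const_nhds
    | add g₁ g₂ _ _ h1 h2 =>
        rw [hP]
        have : ∀ ν : Measure (AddCircle (1:ℝ)), IsProbabilityMeasure ν →
            ∫ z, (g₁ + g₂) z ∂ν = ∫ z, g₁ z ∂ν + ∫ z, g₂ z ∂ν := by
          intro ν hν
          simpa using integral_add (aux_integrable g₁ ν) (aux_integrable g₂ ν)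
        simp only [this _ inferInstance]
        exact h1.add h2
    | smul c g _ h1 =>
        rw [hP]
        have : ∀ ν : Measure (AddCircle (1:ℝ)),
            ∫ z, (c • g) z ∂ν = c * ∫ z, g z ∂ν := by
          intro ν
          simpa using integral_smul c (fun z => g z) (μ := ν)
        simp only [this]
        exact h1.const_mul c
  -- step 3: extend to all of C(AddCircle, ℂ) by density
  intro g
  show Tendsto (fun η' => ∫ z, g z ∂(F η' : Measure (AddCircle (1 : ℝ)))) (𝓝 η)
      (𝓝 (∫ z, g z ∂(F η : Measure (AddCircle (1 : ℝ)))))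
  rw [Metric.tendsto_nhds]
  intro ε hε
  -- choose p in the span with ‖g - p‖ < ε/3
  have hdense : g ∈ closure ((Submodule.span ℂ (Set.range (@fourier 1)) :
      Submodule ℂ C(AddCircle (1:ℝ), ℂ)) : Set C(AddCircle (1:ℝ), ℂ)) := by
    have := span_fourier_closure_eq_top (T := (1:ℝ))
    have : g ∈ (Submodule.span ℂ (Set.range (@fourier 1))).topologicalClosure := by
      rw [this]; trivial
    exact this
  rw [Metric.mem_closure_iff] at hdense
  obtain ⟨p, hpmem, hpd⟩ := hdense (ε/3) (by positivity)
  have hbound : ∀ ν : Measure (AddCircle (1:ℝ)), IsProbabilityMeasure ν →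
      ‖∫ z, g z ∂ν - ∫ z, p z ∂ν‖ ≤ ε/3 := by
    intro ν hν
    rw [← integral_sub (aux_integrable g ν) (aux_integrable p ν)]
    calc ‖∫ z, (g z - p z) ∂ν‖ ≤ (ε/3) * (ν Set.univ).toReal := by
          apply norm_integral_le_of_norm_le_const
          filter_upwards with z
          calc ‖g z - p z‖ = ‖(g - p) z‖ := by simp
            _ ≤ ‖g - p‖ := ContinuousMap.norm_coe_le_norm _ _
            _ ≤ ε/3 := by
                rw [← dist_eq_norm] at *
                exact le_of_lt (by simpa [dist_eq_norm] using hpd)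
      _ = ε/3 := by simp
  have hp := hspan p hpmem
  rw [hP, Metric.tendsto_nhds] at hp
  filter_upwards [hp (ε/3) (by positivity)] with η' hη'
  have h1 := hbound (F η' : Measure (AddCircle (1:ℝ))) inferInstance
  have h2 := hbound (F η : Measure (AddCircle (1:ℝ))) inferInstance
  rw [dist_eq_norm] at *
  set A := ∫ z, g z ∂(F η' : Measure (AddCircle (1:ℝ))) with hA
  set B := ∫ z, p z ∂(F η' : Measure (AddCircle (1:ℝ))) with hB
  set C := ∫ z, p z ∂(F η : Measure (AddCircle (1:ℝ))) with hC
  set D := ∫ z, g z ∂(F η : Measure (AddCircle (1:ℝ))) with hD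
  have h2' : ‖C - D‖ ≤ ε/3 := by rw [norm_sub_rev]; exact h2
  have hsplit : A - D = (A - B) + (B - C) + (C - D) := by ring
  rw [hsplit]
  calc ‖(A - B) + (B - C) + (C - D)‖ ≤ ‖A - B‖ + ‖B - C‖ + ‖C - D‖ := norm_add₃_le
    _ < ε := by linarith
end

section
/- Let X be a compact metric space, T : X → X a homeomorphism, f ∈ C(X) with |f| = 1, and α ∈ S¹. Then the map G : M(X,T) → [0,1] given by G(η) = σ_{f,η}({α}) (the mass of the spectral measure at the single point α) is Borel measurable. -/
open MeasureTheory
open scoped ComplexConjugate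
open Filter Finset
open scoped Topology


lemma fourier_point_add {T : ℝ} (n : ℤ) (x y : AddCircle T) :
    fourier n (x + y) = fourier n x * fourier n y := by
  simp_rw [fourier_apply, zsmul_add, AddCircle.toCircle_add, Circle.coe_mul]

lemma fourier_sub_eq (n : ℤ) (z a : AddCircle (1 : ℝ)) :
    (fourier n (z - a) : ℂ) = conj (fourier n a) * fourier n z := by
  rw [sub_eq_add_neg, fourier_point_add, mul_comm]
  congr 1
  rw [fourier_apply, zsmul_neg, fourier_neg']

lemma norm_fourier_apply (n : ℤ) (x : AddCircle (1:ℝ)) : ‖(fourier n x : ℂ)‖ = 1 := by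
  rw [fourier_apply]; exact Circle.norm_coe _

lemma fourier_eq_zpow (n : ℤ) (w : AddCircle (1:ℝ)) :
    (fourier n w : ℂ) = (fourier 1 w : ℂ) ^ n := by
  have hq : (fourier 1 w : ℂ) ≠ 0 := by
    intro h; have := norm_fourier_apply 1 w; rw [h] at this; simp at this
  have hm1 : (fourier (-1) w : ℂ) = (fourier 1 w : ℂ)⁻¹ := by
    rw [fourier_neg]
    exact (Complex.inv_eq_conj (by simpa using norm_fourier_apply 1 w)).symm
  induction n using Int.induction_on with
  | zero => simp [fourier_zero]
  | succ k ih =>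
      rw [fourier_add (m := (k:ℤ)) (n := 1) (x := w), ih, zpow_add_one₀ hq]
  | pred k ih =>
      have h : (-(k:ℤ) - 1) = (-(k:ℤ)) + (-1) := by ring
      rw [h, fourier_add (m := -(k:ℤ)) (n := -1) (x := w), ih, hm1,
        zpow_add₀ hq, zpow_neg_one]

lemma sum_zpow_Icc (q : ℂ) (hq : q ≠ 0) (N : ℕ) :
    ∑ n ∈ Finset.Icc (-(N:ℤ)) N, q ^ n
      = q ^ (-(N:ℤ)) * ∑ k ∈ Finset.range (2*N+1), q ^ k := by
  rw [Finset.mul_sum]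
  refine Finset.sum_nbij' (fun n => (n + N).toNat) (fun k => (k : ℤ) - N) ?_ ?_ ?_ ?_ ?_
  · intro a ha; simp only [Finset.mem_Icc] at ha; simp only [Finset.mem_range]; omega
  · intro a ha; simp only [Finset.mem_range] at ha; simp only [Finset.mem_Icc]; omega
  · intro a ha; simp only [Finset.mem_Icc] at ha; omega
  · intro a ha; simp only [Finset.mem_range] at ha; omega
  · intro a ha
    simp only [Finset.mem_Icc] at ha
    rw [← zpow_natCast, Int.toNat_of_nonneg (by omega), ← zpow_add₀ hq]
    ring_nf

lemma norm_sum_zpow_le {q : ℂ} (hq : q ≠ 0) (hq1 : q ≠ 1) (hn : ‖q‖ = 1) (N : ℕ) :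
    ‖∑ n ∈ Finset.Icc (-(N:ℤ)) N, q ^ n‖ ≤ 2 / ‖q - 1‖ := by
  rw [sum_zpow_Icc q hq, norm_mul, norm_zpow, hn, one_zpow, one_mul,
    geom_sum_eq hq1, norm_div]
  gcongr
  calc ‖q ^ (2*N+1) - 1‖ ≤ ‖q ^ (2*N+1)‖ + ‖(1:ℂ)‖ := norm_sub_le _ _
    _ = 2 := by rw [norm_pow, hn]; norm_num

lemma card_Icc_int (N : ℕ) : (Finset.Icc (-(N:ℤ)) N).card = 2*N+1 := by
  rw [Int.card_Icc]; omega

lemma wiener_atom (μ : Measure (AddCircle (1:ℝ))) [IsProbabilityMeasure μ]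
    (a : AddCircle (1:ℝ)) :
    Tendsto (fun N : ℕ => (((2*N+1 : ℕ):ℂ))⁻¹ *
        ∑ n ∈ Finset.Icc (-(N:ℤ)) N, conj (fourier n a) * ∫ z, fourier n z ∂μ)
      atTop (𝓝 ((μ {a}).toReal : ℂ)) := by
  set FF : ℕ → AddCircle (1:ℝ) → ℂ := fun N z =>
    (((2*N+1 : ℕ):ℂ))⁻¹ * ∑ n ∈ Finset.Icc (-(N:ℤ)) N, conj (fourier n a) * fourier n z
    with hFF
  have hcardR : ∀ N : ℕ, ((2*N+1 : ℕ):ℝ) ≠ 0 := by intro N; positivity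
  have hint : ∀ n : ℤ, Integrable (fun z => (fourier n z : ℂ)) μ := fun n =>
    (BoundedContinuousFunction.mkOfCompact (fourier n)).integrable μ
  have hexpr : ∀ N : ℕ, (((2*N+1 : ℕ):ℂ))⁻¹ * ∑ n ∈ Finset.Icc (-(N:ℤ)) N,
      conj (fourier n a) * ∫ z, fourier n z ∂μ = ∫ z, FF N z ∂μ := by
    intro N
    rw [hFF]
    simp only
    rw [integral_const_mul, integral_finset_sum _ (fun n _ => (hint n).const_mul _)]
    congr 1
    exact Finset.sum_congr rfl fun n _ => (integral_const_mul _ _).symm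
  have hterm : ∀ (z : AddCircle (1:ℝ)) (n : ℤ),
      conj (fourier n a) * (fourier n z : ℂ) = (fourier 1 (z - a) : ℂ) ^ n := by
    intro z n
    rw [← fourier_sub_eq, fourier_eq_zpow]
  have hptw : ∀ z, Tendsto (fun N => FF N z) atTop
      (𝓝 (Set.indicator {a} (fun _ => (1:ℂ)) z)) := by
    intro z
    set q : ℂ := (fourier 1 (z - a) : ℂ) with hqdef
    have hq0 : q ≠ 0 := by
      intro h
      have := norm_fourier_apply 1 (z - a)
      rw [← hqdef, h] at this; simp at this
    have hFFz : ∀ N : ℕ, FF N z = (((2*N+1 : ℕ):ℂ))⁻¹ * ∑ n ∈ Finset.Icc (-(N:ℤ)) N, q ^ n := by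
      intro N
      rw [hFF]
      simp only
      congr 1
      exact Finset.sum_congr rfl fun n _ => hterm z n
    by_cases hz : z = a
    · subst hz
      have hq1 : q = 1 := by rw [hqdef, sub_self]; exact fourier_eval_zero 1
      have : ∀ N : ℕ, FF N z = 1 := by
        intro N
        rw [hFFz, hq1]
        simp only [one_zpow, Finset.sum_const, nsmul_eq_mul, mul_one, card_Icc_int]
        rw [inv_mul_cancel₀ (by exact_mod_cast hcardR N)]
      simp only [this]
      rw [Set.indicator_of_mem (Set.mem_singleton z)]
      exact tendsto_const_nhds
    · have hq1 : q ≠ 1 := by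
        intro h
        apply hz
        have h0 : (fourier 1 ((0 : AddCircle (1:ℝ))) : ℂ) = 1 := fourier_eval_zero 1
        have : (fourier 1 (z - a) : ℂ) = (fourier 1 (0 : AddCircle (1:ℝ)) : ℂ) := by
          rw [← hqdef, h, h0]
        rw [fourier_one, fourier_one] at this
        have := AddCircle.injective_toCircle (one_ne_zero) (Subtype.coe_injective this)
        rwa [sub_eq_zero] at this
      rw [Set.indicator_of_notMem (by simpa using hz)]
      rw [tendsto_zero_iff_norm_tendsto_zero]
      have hbnd : ∀ N : ℕ, ‖FF N z‖ ≤ (((2*N+1 : ℕ):ℝ))⁻¹ * (2 / ‖q - 1‖) := by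
        intro N
        rw [hFFz, norm_mul, norm_inv, Complex.norm_natCast]
        gcongr
        exact norm_sum_zpow_le hq0 hq1 (by rw [hqdef]; exact norm_fourier_apply 1 (z - a)) N
      have hto : Tendsto (fun N : ℕ => (((2*N+1 : ℕ):ℝ))⁻¹ * (2 / ‖q - 1‖)) atTop (𝓝 0) := by
        have h1 : Tendsto (fun N : ℕ => ((2*N+1 : ℕ):ℝ)) atTop atTop :=
          tendsto_natCast_atTop_atTop.comp (tendsto_atTop_mono (fun n => by simp only [id_eq]; omega) tendsto_id)
        simpa using (h1.inv_tendsto_atTop).mul_const (2 / ‖q - 1‖)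
      exact squeeze_zero (fun N => norm_nonneg _) hbnd hto
  have hmeas : ∀ N : ℕ, AEStronglyMeasurable (FF N) μ := by
    intro N
    refine (Continuous.aestronglyMeasurable ?_)
    exact continuous_const.mul (continuous_finset_sum _ fun n _ =>
      continuous_const.mul (fourier n).continuous)
  have hbound : ∀ N : ℕ, ∀ᵐ z ∂μ, ‖FF N z‖ ≤ (1:ℝ) := by
    intro N
    filter_upwards with z
    rw [hFF]
    simp only
    rw [norm_mul, norm_inv, Complex.norm_natCast]
    calc (((2*N+1 : ℕ):ℝ))⁻¹ * ‖∑ n ∈ Finset.Icc (-(N:ℤ)) N, conj (fourier n a) * (fourier n z:ℂ)‖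
        ≤ (((2*N+1 : ℕ):ℝ))⁻¹ * ∑ n ∈ Finset.Icc (-(N:ℤ)) N, ‖conj (fourier n a) * (fourier n z:ℂ)‖ := by
          gcongr; exact norm_sum_le _ _
      _ = 1 := by
          have he : ∀ n ∈ Finset.Icc (-(N:ℤ)) N,
              ‖conj (fourier n a) * (fourier n z : ℂ)‖ = 1 := by
            intro n _
            rw [norm_mul, RCLike.norm_conj, norm_fourier_apply, norm_fourier_apply, mul_one]
          rw [Finset.sum_congr rfl he, Finset.sum_const, card_Icc_int]
          simp only [nsmul_eq_mul, mul_one]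
          exact inv_mul_cancel₀ (hcardR N)
  have hdc := tendsto_integral_of_dominated_convergence (μ := μ)
      (F := FF) (f := Set.indicator {a} (fun _ => (1:ℂ))) (bound := fun _ => 1)
      hmeas (integrable_const 1) hbound
      (by filter_upwards with z using hptw z)
  rw [integral_indicator_const (1:ℂ) (measurableSet_singleton a)] at hdc
  rw [Complex.real_smul, mul_one] at hdc
  have : (fun N : ℕ => (((2*N+1 : ℕ):ℂ))⁻¹ * ∑ n ∈ Finset.Icc (-(N:ℤ)) N,
      conj (fourier n a) * ∫ z, fourier n z ∂μ) = fun N => ∫ z, FF N z ∂μ :=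
    funext hexpr
  rw [this]
  exact hdc

lemma cont_zpow_apply' {X : Type*} [TopologicalSpace X] (T : X ≃ₜ X) (n : ℤ) :
    Continuous fun x => (T.toEquiv ^ n) x := by
  induction n using Int.induction_on with
  | zero => simpa using continuous_id'
  | succ k ih =>
      have h : ∀ x, (T.toEquiv ^ ((k:ℤ)+1)) x = (T.toEquiv ^ (k:ℤ)) (T x) := by
        intro x; rw [zpow_add_one, Equiv.Perm.mul_apply]; rfl
      simp only [h]; exact ih.comp T.continuous
  | pred k ih =>
      have h : ∀ x, (T.toEquiv ^ (-(k:ℤ)-1)) x = (T.toEquiv ^ (-(k:ℤ))) (T.symm x) := by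
        intro x; rw [zpow_sub_one, Equiv.Perm.mul_apply]; rfl
      simp only [h]; exact ih.comp T.symm.continuous

/-- Let `X` be a compact metric space, `T : X → X` a homeomorphism,
`f ∈ C(X)` with `|f| = 1`, and `α` a point of the circle. Then the map
`G : M(X,T) → [0,1]`, `G(η) = σ_{f,η}({α})` (the mass of the spectral measure of `f`
at the point `α`), is Borel measurable on the compact space `M(X,T)` of `T`-invariant
Borel probability measures with the weak* topology. -/
theorem spectral_measure_atom_measurable
    {X : Type*} [MetricSpace X] [CompactSpace X] [MeasurableSpace X] [BorelSpace X]
    (T : X ≃ₜ X) (f : C(X, ℂ)) (hf : ∀ x, ‖f x‖ = 1)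
    (α : AddCircle (1 : ℝ))
    (F : {η : ProbabilityMeasure X //
            MeasurePreserving T (η : Measure X) (η : Measure X)} →
          ProbabilityMeasure (AddCircle (1 : ℝ)))
    (hF : ∀ η, ∀ n : ℤ,
      ∫ z, fourier n z ∂(F η : Measure (AddCircle (1 : ℝ)))
        = ∫ x, f x * conj (f ((T.toEquiv ^ n) x)) ∂(η.1 : Measure X))
    (G : {η : ProbabilityMeasure X //
            MeasurePreserving T (η : Measure X) (η : Measure X)} → ℝ)
    (hG : ∀ η, G η = ((F η : Measure (AddCircle (1 : ℝ))) {α}).toReal) :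
    Measurable[borel _] G := by
  letI mS : MeasurableSpace {η : ProbabilityMeasure X //
      MeasurePreserving T (η : Measure X) (η : Measure X)} := borel _
  haveI : BorelSpace {η : ProbabilityMeasure X //
      MeasurePreserving T (η : Measure X) (η : Measure X)} := ⟨rfl⟩
  -- the continuous test functions
  have hcont : ∀ n : ℤ, Continuous fun x => f x * conj (f ((T.toEquiv ^ n) x)) := fun n =>
    f.continuous.mul ((RCLike.continuous_conj).comp
      (f.continuous.comp (cont_zpow_apply' T n)))
  have hint : ∀ (η : {η : ProbabilityMeasure X //
        MeasurePreserving T (η : Measure X) (η : Measure X)}) (n : ℤ),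
      Integrable (fun x => f x * conj (f ((T.toEquiv ^ n) x))) (η.1 : Measure X) := fun η n =>
    (BoundedContinuousFunction.mkOfCompact ⟨_, hcont n⟩).integrable _
  -- the approximating functions
  set g : ℕ → {η : ProbabilityMeasure X //
      MeasurePreserving T (η : Measure X) (η : Measure X)} → ℝ := fun N η =>
    (((2*N+1 : ℕ):ℝ))⁻¹ * ∑ n ∈ Finset.Icc (-(N:ℤ)) N,
      ((conj (fourier n α)).re * ∫ x, (f x * conj (f ((T.toEquiv ^ n) x))).re ∂(η.1 : Measure X)
        - (conj (fourier n α)).im *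
            ∫ x, (f x * conj (f ((T.toEquiv ^ n) x))).im ∂(η.1 : Measure X)) with hg
  -- each g N equals the real part of the complex partial average
  have hglue : ∀ (N : ℕ) η, g N η =
      ((((2*N+1 : ℕ):ℂ))⁻¹ * ∑ n ∈ Finset.Icc (-(N:ℤ)) N,
        conj (fourier n α) * ∫ z, fourier n z ∂(F η : Measure (AddCircle (1:ℝ)))).re := by
    intro N η
    have hcast : (((2*N+1 : ℕ):ℂ))⁻¹ = (((((2*N+1 : ℕ):ℝ))⁻¹ : ℝ) : ℂ) := by push_cast; ring
    show (((2*N+1 : ℕ):ℝ))⁻¹ * ∑ n ∈ Finset.Icc (-(N:ℤ)) N,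
      ((conj (fourier n α)).re * ∫ x, (f x * conj (f ((T.toEquiv ^ n) x))).re ∂(η.1 : Measure X)
        - (conj (fourier n α)).im *
            ∫ x, (f x * conj (f ((T.toEquiv ^ n) x))).im ∂(η.1 : Measure X)) = _
    rw [hcast, Complex.re_ofReal_mul, Complex.re_sum]
    congr 1
    refine Finset.sum_congr rfl fun n _ => ?_
    rw [hF η n, Complex.mul_re]
    have hre : ∫ x, (f x * conj (f ((T.toEquiv ^ n) x))).re ∂(η.1 : Measure X)
        = (∫ x, f x * conj (f ((T.toEquiv ^ n) x)) ∂(η.1 : Measure X)).re := by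
      simpa [RCLike.re_eq_complex_re] using integral_re (hint η n)
    have him : ∫ x, (f x * conj (f ((T.toEquiv ^ n) x))).im ∂(η.1 : Measure X)
        = (∫ x, f x * conj (f ((T.toEquiv ^ n) x)) ∂(η.1 : Measure X)).im := by
      simpa [RCLike.im_eq_complex_im] using integral_im (hint η n)
    rw [hre, him]
  -- each g N is continuous, hence measurable
  have hgmeas : ∀ N : ℕ, Measurable (g N) := by
    intro N
    refine Continuous.measurable ?_
    refine continuous_const.mul (continuous_finset_sum _ fun n _ => ?_)
    refine Continuous.sub (continuous_const.mul ?_) (continuous_const.mul ?_)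
    · have := (ProbabilityMeasure.continuous_integral_boundedContinuousFunction
        (X := X) (BoundedContinuousFunction.mkOfCompact
          ⟨fun x => (f x * conj (f ((T.toEquiv ^ n) x))).re,
            Complex.continuous_re.comp (hcont n)⟩)).comp
        (continuous_subtype_val (p := fun η : ProbabilityMeasure X =>
          MeasurePreserving T (η : Measure X) (η : Measure X)))
      simpa [Function.comp_def] using this
    · have := (ProbabilityMeasure.continuous_integral_boundedContinuousFunction
        (X := X) (BoundedContinuousFunction.mkOfCompact
          ⟨fun x => (f x * conj (f ((T.toEquiv ^ n) x))).im,
            Complex.continuous_im.comp (hcont n)⟩)).comp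
        (continuous_subtype_val (p := fun η : ProbabilityMeasure X =>
          MeasurePreserving T (η : Measure X) (η : Measure X)))
      simpa [Function.comp_def] using this
  -- pointwise convergence
  have hlim : ∀ η, Tendsto (fun N => g N η) atTop (𝓝 (G η)) := by
    intro η
    have hw := wiener_atom (F η : Measure (AddCircle (1:ℝ))) α
    have h2 := (Complex.continuous_re.tendsto _).comp hw
    simp only [Function.comp_def] at h2
    rw [hG η]
    have heq : (fun N : ℕ => ((((2*N+1 : ℕ):ℂ))⁻¹ * ∑ n ∈ Finset.Icc (-(N:ℤ)) N,
        conj (fourier n α) * ∫ z, fourier n z ∂(F η : Measure (AddCircle (1:ℝ)))).re)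
        = fun N => g N η := by
      funext N; exact (hglue N η).symm
    rw [heq] at h2
    simpa using h2
  exact measurable_of_tendsto_metrizable hgmeas (tendsto_pi_nhds.mpr hlim)
end

section
/- Let T be a measure-preserving homeomorphism of a compact metric space (X,μ) with ergodic decomposition μ = ∫ μ_x̄ dP(x̄). Then α ∈ S¹ is an eigenvalue of the Koopman operator of (T,μ) if and only if α is an eigenvalue of (T,μ_x̄) for a set of x̄ of positive P-measure. -/
open MeasureTheory Filter Topology
open scoped ENNReal NNReal

namespace EigenAux

noncomputable section

variable {X : Type*} [MeasurableSpace X]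

/-- The squared `L²` "norm" as a lower integral. -/
def L2I (v : X → ℂ) (ν : Measure X) : ℝ≥0∞ := ∫⁻ x, (‖v x‖₊ : ℝ≥0∞) ^ (2:ℝ) ∂ν

lemma eLpNorm_eq_L2I (v : X → ℂ) (ν : Measure X) :
    eLpNorm v 2 ν = L2I v ν ^ (1/2 : ℝ) := by
  rw [eLpNorm_eq_lintegral_rpow_enorm_toReal two_ne_zero ENNReal.ofNat_ne_top]
  simp [L2I]
  rfl

lemma L2I_eq_sq (v : X → ℂ) (ν : Measure X) :
    L2I v ν = eLpNorm v 2 ν ^ (2:ℝ) := by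
  rw [eLpNorm_eq_L2I, ← ENNReal.rpow_mul]
  norm_num

lemma L2I_measurable {v : X → ℂ} (hv : Measurable v) :
    Measurable fun x => (‖v x‖₊ : ℝ≥0∞) ^ (2:ℝ) :=
  hv.enorm.pow_const _

variable {Xb : Type*} [MeasurableSpace Xb] {P : Measure Xb} {m : Xb → Measure X}

lemma L2I_bind (hm : Measurable m) {v : X → ℂ} (hv : Measurable v) :
    L2I v (P.bind m) = ∫⁻ b, L2I v (m b) ∂P :=
  Measure.lintegral_bind hm.aemeasurable (L2I_measurable hv).aemeasurable

lemma bind_null_iff (hm : Measurable m) {A : Set X} (hA : MeasurableSet A) :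
    P.bind m A = 0 ↔ ∀ᵐ b ∂P, m b A = 0 := by
  have hmf : Measurable fun b => m b A := (Measure.measurable_coe hA).comp hm
  rw [Measure.bind_apply hA hm.aemeasurable, lintegral_eq_zero_iff hmf]
  exact ⟨fun h => h.mono fun b hb => by simpa using hb,
    fun h => h.mono fun b hb => by simpa using hb⟩

lemma ae_eq_transfer (hm : Measurable m) {v w : X → ℂ}
    (hv : Measurable v) (hw : Measurable w) :
    v =ᵐ[P.bind m] w ↔ ∀ᵐ b ∂P, v =ᵐ[m b] w := by
  have hA : MeasurableSet {x | ¬ v x = w x} := (measurableSet_eq_fun hv hw).compl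
  have key : ∀ ν : Measure X, (v =ᵐ[ν] w) ↔ ν {x | ¬ v x = w x} = 0 := fun ν => by
    rw [Filter.EventuallyEq, ae_iff]
  rw [key, bind_null_iff hm hA]
  exact ⟨fun h => h.mono fun b hb => (key (m b)).2 hb,
    fun h => h.mono fun b hb => (key (m b)).1 hb⟩

lemma fiber_memℒp (hm : Measurable m) {v : X → ℂ} (hv : StronglyMeasurable v)
    (h2 : MemLp v 2 (P.bind m)) : ∀ᵐ b ∂P, MemLp v 2 (m b) := by
  have hfin : L2I v (P.bind m) ≠ ⊤ := by
    rw [L2I_eq_sq]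
    exact (ENNReal.rpow_lt_top_of_nonneg (by norm_num) h2.2.ne).ne
  have hmeas : Measurable fun b => L2I v (m b) :=
    (Measure.measurable_lintegral (L2I_measurable hv.measurable)).comp hm
  have h := ae_lt_top hmeas (by rw [← L2I_bind hm hv.measurable]; exact hfin)
  filter_upwards [h] with b hb
  refine ⟨hv.aestronglyMeasurable, ?_⟩
  rw [eLpNorm_eq_L2I]
  exact ENNReal.rpow_lt_top_of_nonneg (by norm_num) hb.ne

variable {T : X → X} {ν : Measure X}

/-- The Koopman operator on `L²`. -/
def koopman (hν : MeasurePreserving T ν ν) : Lp ℂ 2 ν →L[ℂ] Lp ℂ 2 ν where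
  toFun := Lp.compMeasurePreserving T hν
  map_add' f g := map_add _ f g
  map_smul' c g := by
    refine Lp.ext ?_
    have h1 := Lp.coeFn_compMeasurePreserving (c • g) hν
    have h2 : (⇑(c • g)) ∘ T =ᵐ[ν] (c • (⇑g : X → ℂ)) ∘ T :=
      hν.quasiMeasurePreserving.ae_eq_comp (Lp.coeFn_smul c g)
    have h3 := Lp.coeFn_smul c (Lp.compMeasurePreserving T hν g)
    have h4 : (⇑g) ∘ T =ᵐ[ν] ⇑(Lp.compMeasurePreserving T hν g) :=
      (Lp.coeFn_compMeasurePreserving g hν).symm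
    filter_upwards [h1, h2, h3, h4] with x hx1 hx2 hx3 hx4
    simp only [RingHom.id_apply]
    rw [hx3]
    simp only [Pi.smul_apply]
    rw [← hx4]
    calc (Lp.compMeasurePreserving T hν (c • g) : X → ℂ) x
        = ((⇑(c • g)) ∘ T) x := hx1
      _ = ((c • (⇑g : X → ℂ)) ∘ T) x := hx2
      _ = c • ((⇑g) ∘ T) x := rfl
  cont := (Lp.isometry_compMeasurePreserving hν).continuous

lemma coeFn_koopman (hν : MeasurePreserving T ν ν) (g : Lp ℂ 2 ν) :
    ⇑(koopman hν g) =ᵐ[ν] fun x => g (T x) :=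
  Lp.coeFn_compMeasurePreserving g hν

lemma norm_koopman_le (hν : MeasurePreserving T ν ν) {β : ℂ} (hβ : ‖β‖ = 1) :
    ‖β • koopman hν‖ ≤ 1 := by
  refine le_trans (norm_smul_le β (koopman hν)) ?_
  rw [hβ, one_mul]
  refine ContinuousLinearMap.opNorm_le_bound _ zero_le_one fun g => ?_
  rw [one_mul]
  exact le_of_eq (Lp.norm_compMeasurePreserving g hν)

lemma coeFn_V (hν : MeasurePreserving T ν ν) (β : ℂ) (g : Lp ℂ 2 ν) :
    ⇑((β • koopman hν) g) =ᵐ[ν] fun x => β • g (T x) := by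
  have h1 : (β • koopman hν) g = β • (koopman hν g) := rfl
  rw [h1]
  filter_upwards [Lp.coeFn_smul β (koopman hν g), coeFn_koopman hν g] with x hx1 hx2
  rw [hx1, Pi.smul_apply, hx2]

lemma coeFn_V_iterate (hν : MeasurePreserving T ν ν) (β : ℂ) (n : ℕ) (g : Lp ℂ 2 ν)
    {gf : X → ℂ} (hg : ⇑g =ᵐ[ν] gf) :
    ⇑((⇑(β • koopman hν))^[n] g) =ᵐ[ν] fun x => β ^ n • gf (T^[n] x) := by
  induction n with
  | zero => simpa using hg
  | succ n ih =>
    rw [Function.iterate_succ_apply']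
    have h1 := coeFn_V hν β ((⇑(β • koopman hν))^[n] g)
    have h2 : (⇑((⇑(β • koopman hν))^[n] g)) ∘ T =ᵐ[ν]
        (fun x => β ^ n • gf (T^[n] x)) ∘ T :=
      hν.quasiMeasurePreserving.ae_eq_comp ih
    filter_upwards [h1, h2] with x hx1 hx2
    calc (⇑((β • koopman hν) ((⇑(β • koopman hν))^[n] g))) x
        = β • (⇑((⇑(β • koopman hν))^[n] g)) (T x) := hx1
      _ = β • ((⇑((⇑(β • koopman hν))^[n] g)) ∘ T) x := rfl
      _ = β • (β ^ n • gf (T^[n] (T x))) := by rw [hx2]; rfl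
      _ = β ^ (n+1) • gf (T^[n+1] x) := by
          rw [smul_smul, ← pow_succ', Function.iterate_succ_apply]

lemma coeFn_lp_sum {ι : Type*} (s : Finset ι) (w : ι → Lp ℂ 2 ν) :
    ⇑(∑ i ∈ s, w i) =ᵐ[ν] fun x => ∑ i ∈ s, w i x := by
  classical
  induction s using Finset.induction_on with
  | empty => simp only [Finset.sum_empty]; exact Lp.coeFn_zero ℂ 2 ν
  | insert a s hnot ih =>
    rw [Finset.sum_insert hnot]
    filter_upwards [Lp.coeFn_add (w a) (∑ i ∈ s, w i), ih] with x hx1 hx2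
    rw [hx1, Pi.add_apply, hx2, Finset.sum_insert hnot]

lemma coeFn_birkhoffAverage (hν : MeasurePreserving T ν ν) (β : ℂ) (N : ℕ) (g : Lp ℂ 2 ν)
    {gf : X → ℂ} (hg : ⇑g =ᵐ[ν] gf) :
    ⇑(birkhoffAverage ℂ (⇑(β • koopman hν)) _root_.id N g) =ᵐ[ν]
      fun x => (N:ℂ)⁻¹ • ∑ n ∈ Finset.range N, β ^ n • gf (T^[n] x) := by
  have hsum : birkhoffAverage ℂ (⇑(β • koopman hν)) _root_.id N g
      = (N:ℂ)⁻¹ • ∑ n ∈ Finset.range N, (⇑(β • koopman hν))^[n] g := by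
    simp [birkhoffAverage, birkhoffSum]
  rw [hsum]
  have hall : ∀ᵐ x ∂ν, ∀ n : ℕ, (⇑((⇑(β • koopman hν))^[n] g)) x = β ^ n • gf (T^[n] x) :=
    ae_all_iff.2 fun n => coeFn_V_iterate hν β n g hg
  filter_upwards [Lp.coeFn_smul ((N:ℂ)⁻¹) (∑ n ∈ Finset.range N, (⇑(β • koopman hν))^[n] g),
    coeFn_lp_sum (Finset.range N) (fun n => (⇑(β • koopman hν))^[n] g), hall] with x hx1 hx2 hx3
  rw [hx1, Pi.smul_apply, hx2]
  congr 1
  exact Finset.sum_congr rfl fun n _ => hx3 n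

lemma tendsto_rpow_half {f : ℕ → ℝ≥0∞} (h : Tendsto f atTop (𝓝 0)) :
    Tendsto (fun j => f j ^ (1/2:ℝ)) atTop (𝓝 0) := by
  rw [ENNReal.tendsto_nhds_zero] at h ⊢
  intro ε hε
  filter_upwards [h (ε ^ (2:ℕ)) (pos_iff_ne_zero.2 (pow_ne_zero 2 hε.ne'))] with j hj
  calc f j ^ (1/2:ℝ) ≤ (ε ^ (2:ℕ)) ^ (1/2:ℝ) := ENNReal.rpow_le_rpow hj (by norm_num)
    _ = ε := by rw [← ENNReal.rpow_natCast, ← ENNReal.rpow_mul]; norm_num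

lemma eLpNorm_coeFn_eq (w : Lp ℂ 2 ν) : eLpNorm (⇑w) 2 ν = ENNReal.ofReal ‖w‖ := by
  rw [Lp.norm_def, ENNReal.ofReal_toReal (Lp.eLpNorm_ne_top w)]

section Main

variable {X : Type*} [MeasurableSpace X] {T : X → X} {ν : Measure X}

set_option maxHeartbeats 800000 in
lemma proj_eq_toLp (hν : MeasurePreserving T ν ν) {β : ℂ}
    (hVn : ‖β • koopman hν‖ ≤ 1) (w : Lp ℂ 2 ν) {q : X → ℂ} (hq2 : MemLp q 2 ν)
    (NN : ℕ → ℕ) (hmono : Tendsto NN atTop atTop)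
    (htend0 : Tendsto (fun j => eLpNorm
      ((⇑(birkhoffAverage ℂ (⇑(β • koopman hν)) _root_.id (NN j) w) : X → ℂ) - q) 2 ν)
      atTop (𝓝 0)) :
    (↑(Submodule.orthogonalProjectionOnto ((β • koopman hν).eqLocus (1 : Lp ℂ 2 (ν) →L[ℂ] Lp ℂ 2 (ν))) w) : Lp ℂ 2 ν)
      = hq2.toLp q := by
  have t1 : Tendsto (fun j => birkhoffAverage ℂ (⇑(β • koopman hν)) _root_.id (NN j) w)
      atTop (𝓝 ↑(Submodule.orthogonalProjectionOnto ((β • koopman hν).eqLocus (1 : Lp ℂ 2 (ν) →L[ℂ] Lp ℂ 2 (ν))) w)) :=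
    ((β • koopman hν).tendsto_birkhoffAverage_orthogonalProjection hVn w).comp hmono
  have hnorm : ∀ j, ‖birkhoffAverage ℂ (⇑(β • koopman hν)) _root_.id (NN j) w - hq2.toLp q‖
      = (eLpNorm ((⇑(birkhoffAverage ℂ (⇑(β • koopman hν)) _root_.id (NN j) w) : X → ℂ) - q)
          2 ν).toReal := by
    intro j
    rw [Lp.norm_def]
    congr 1
    refine eLpNorm_congr_ae ?_
    filter_upwards [Lp.coeFn_sub (birkhoffAverage ℂ (⇑(β • koopman hν)) _root_.id (NN j) w)
      (hq2.toLp q), hq2.coeFn_toLp] with x h1 h2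
    rw [h1, Pi.sub_apply, Pi.sub_apply, h2]
  have t2 : Tendsto (fun j => birkhoffAverage ℂ (⇑(β • koopman hν)) _root_.id (NN j) w)
      atTop (𝓝 (hq2.toLp q)) := by
    rw [tendsto_iff_norm_sub_tendsto_zero]
    have h0 : Tendsto (fun j => (eLpNorm
        ((⇑(birkhoffAverage ℂ (⇑(β • koopman hν)) _root_.id (NN j) w) : X → ℂ) - q)
        2 ν).toReal) atTop (𝓝 0) := by
      have := (ENNReal.tendsto_toReal (show (0:ℝ≥0∞) ≠ ⊤ by simp)).comp htend0
      exact this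
    exact (funext hnorm : _) ▸ h0
  exact tendsto_nhds_unique t1 t2

end Main

section Endgame

variable {X : Type*} [MetricSpace X] [CompactSpace X] [MeasurableSpace X] [BorelSpace X]
  {T : X → X} {ν : Measure X}

set_option maxHeartbeats 800000 in
lemma endgame [IsProbabilityMeasure ν] (hν : MeasurePreserving T ν ν)
    {α β : ℂ} (hβα : β * α = 1)
    (u : ℕ → C(X, ℂ)) (hu : DenseRange u)
    (hproj0 : ∀ k, (↑(Submodule.orthogonalProjectionOnto ((β • koopman hν).eqLocus (1 : Lp ℂ 2 (ν) →L[ℂ] Lp ℂ 2 (ν)))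
      (ContinuousMap.toLp 2 ν ℂ (u k))) : Lp ℂ 2 ν) = 0)
    (h : X → ℂ) (hh2 : MemLp h 2 ν) (hhne : ¬ (h =ᵐ[ν] 0))
    (hheig : (fun x => h (T x)) =ᵐ[ν] fun x => α * h x) : False := by
  set hL : Lp ℂ 2 ν := hh2.toLp h with hLdef
  have hLne : hL ≠ 0 := by
    intro h0
    exact hhne (hh2.coeFn_toLp.symm.trans (Lp.eq_zero_iff_ae_eq_zero.1 h0))
  have hLfix : (β • koopman hν) hL = hL := by
    refine Lp.ext ?_
    have h1 := coeFn_V hν β hL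
    have h2 : (⇑hL) ∘ T =ᵐ[ν] h ∘ T :=
      hν.quasiMeasurePreserving.ae_eq_comp hh2.coeFn_toLp
    filter_upwards [h1, h2, hheig, hh2.coeFn_toLp] with x hx1 hx2 hx3 hx4
    rw [hx1]
    calc β • (⇑hL) (T x) = β • h (T x) := by
          rw [show (⇑hL) (T x) = h (T x) from hx2]
      _ = β * (α * h x) := by rw [smul_eq_mul, hx3]
      _ = h x := by rw [← mul_assoc, hβα, one_mul]
      _ = (⇑hL) x := hx4.symm
  have hLmem : hL ∈ (β • koopman hν).eqLocus (1 : Lp ℂ 2 (ν) →L[ℂ] Lp ℂ 2 (ν)) :=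
    LinearMap.mem_eqLocus.2 (by simpa using hLfix)
  have hLproj : (↑(Submodule.orthogonalProjectionOnto ((β • koopman hν).eqLocus (1 : Lp ℂ 2 (ν) →L[ℂ] Lp ℂ 2 (ν))) hL)
      : Lp ℂ 2 ν) = hL := Submodule.starProjection_eq_self_iff.2 hLmem
  have hε : 0 < ‖hL‖ := norm_pos_iff.2 hLne
  obtain ⟨c, hc⟩ := (ContinuousMap.toLp_denseRange (E := ℂ) (μ := ν) (p := 2) ℂ
    (by norm_num)).exists_dist_lt hL (half_pos hε)
  obtain ⟨k, hkc⟩ := hu.exists_dist_lt c (half_pos hε)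
  have hd1 : dist (ContinuousMap.toLp 2 ν ℂ (u k)) (ContinuousMap.toLp 2 ν ℂ c)
      ≤ dist (u k) c := by
    rw [dist_eq_norm, ← map_sub, dist_eq_norm, Lp.norm_def]
    refine ENNReal.toReal_le_of_le_ofReal (norm_nonneg _) ?_
    have hb' : eLpNorm (⇑((u k) - c) : X → ℂ) 2 ν
        ≤ ν Set.univ ^ (2:ℝ≥0∞).toReal⁻¹ * ENNReal.ofReal ‖(u k) - c‖ :=
      eLpNorm_le_of_ae_bound
        (Filter.Eventually.of_forall fun x => ContinuousMap.norm_coe_le_norm _ x)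
    calc eLpNorm (⇑(ContinuousMap.toLp 2 ν ℂ ((u k) - c))) 2 ν
        = eLpNorm (⇑((u k) - c) : X → ℂ) 2 ν :=
          eLpNorm_congr_ae (ContinuousMap.coeFn_toLp ν _)
      _ ≤ ν Set.univ ^ (2:ℝ≥0∞).toReal⁻¹ * ENNReal.ofReal ‖(u k) - c‖ := hb'
      _ = ENNReal.ofReal ‖(u k) - c‖ := by
          rw [measure_univ, ENNReal.one_rpow, one_mul]
  have htri : ‖ContinuousMap.toLp 2 ν ℂ (u k) - hL‖ < ‖hL‖ := by
    rw [← dist_eq_norm]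
    calc dist (ContinuousMap.toLp 2 ν ℂ (u k)) hL
        ≤ dist (ContinuousMap.toLp 2 ν ℂ (u k)) (ContinuousMap.toLp 2 ν ℂ c)
          + dist (ContinuousMap.toLp 2 ν ℂ c) hL := dist_triangle _ _ _
      _ < ‖hL‖ := by
          have h1 : dist (ContinuousMap.toLp 2 ν ℂ (u k)) (ContinuousMap.toLp 2 ν ℂ c)
              < ‖hL‖/2 := by
            refine lt_of_le_of_lt hd1 ?_
            rw [dist_comm]
            exact hkc
          have h2 : dist (ContinuousMap.toLp 2 ν ℂ c) hL < ‖hL‖/2 := by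
            rw [dist_comm]
            exact hc
          linarith
  have hcontr : ‖hL‖ ≤ ‖ContinuousMap.toLp 2 ν ℂ (u k) - hL‖ := by
    have e1 : (↑(Submodule.orthogonalProjectionOnto ((β • koopman hν).eqLocus (1 : Lp ℂ 2 (ν) →L[ℂ] Lp ℂ 2 (ν)))
        (ContinuousMap.toLp 2 ν ℂ (u k) - hL)) : Lp ℂ 2 ν) = -hL := by
      rw [map_sub, Submodule.coe_sub, hproj0 k, hLproj, zero_sub]
    have e2 : ‖hL‖ = ‖(↑(Submodule.orthogonalProjectionOnto ((β • koopman hν).eqLocus (1 : Lp ℂ 2 (ν) →L[ℂ] Lp ℂ 2 (ν)))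
        (ContinuousMap.toLp 2 ν ℂ (u k) - hL)) : Lp ℂ 2 ν)‖ := by rw [e1, norm_neg]
    rw [e2]
    calc ‖(↑(Submodule.orthogonalProjectionOnto ((β • koopman hν).eqLocus (1 : Lp ℂ 2 (ν) →L[ℂ] Lp ℂ 2 (ν)))
          (ContinuousMap.toLp 2 ν ℂ (u k) - hL)) : Lp ℂ 2 ν)‖
        = ‖Submodule.orthogonalProjectionOnto ((β • koopman hν).eqLocus (1 : Lp ℂ 2 (ν) →L[ℂ] Lp ℂ 2 (ν)))
            (ContinuousMap.toLp 2 ν ℂ (u k) - hL)‖ := Submodule.norm_coe _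
      _ ≤ ‖Submodule.orthogonalProjectionOnto ((β • koopman hν).eqLocus (1 : Lp ℂ 2 (ν) →L[ℂ] Lp ℂ 2 (ν)))‖
            * ‖ContinuousMap.toLp 2 ν ℂ (u k) - hL‖ :=
          ContinuousLinearMap.le_opNorm _ _
      _ ≤ 1 * ‖ContinuousMap.toLp 2 ν ℂ (u k) - hL‖ :=
          mul_le_mul_of_nonneg_right (Submodule.orthogonalProjectionOnto_norm_le _) (norm_nonneg _)
      _ = ‖ContinuousMap.toLp 2 ν ℂ (u k) - hL‖ := one_mul _
  exact absurd htri (not_lt.2 hcontr)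

end Endgame

end

end EigenAux
open MeasureTheory Filter Topology EigenAux
open scoped ENNReal NNReal

set_option maxHeartbeats 3000000 in
/-- Let `T` be a measure-preserving homeomorphism of a compact metric
space `(X, μ)` with ergodic decomposition `μ = ∫ μ_x̄ dP(x̄)` (expressed via
`μ = P.bind m`, where each fiber measure `m b` is an ergodic `T`-invariant probability
measure). Then `α ∈ S¹` is an eigenvalue of the Koopman operator of `(T, μ)` if and
only if `α` is an eigenvalue of `(T, μ_x̄)` for a set of `x̄` of positive `P`-measure. -/
theorem eigenvalue_iff_eigenvalue_on_positive_measure_of_fibers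
    {X : Type*} [MetricSpace X] [CompactSpace X] [MeasurableSpace X] [BorelSpace X]
    (T : X ≃ₜ X) (μ : Measure X) [IsProbabilityMeasure μ]
    (hT : MeasurePreserving T μ μ)
    {Xb : Type*} [MeasurableSpace Xb] (P : Measure Xb) [IsProbabilityMeasure P]
    (m : Xb → Measure X) (hm : Measurable m)
    (hprob : ∀ b, IsProbabilityMeasure (m b))
    (herg : ∀ b, Ergodic T (m b))
    (hdec : μ = P.bind m)
    (α : ℂ) (hα : ‖α‖ = 1) :
    (∃ f : X → ℂ, MemLp f 2 μ ∧ ¬ (f =ᵐ[μ] 0) ∧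
        (fun x => f (T x)) =ᵐ[μ] (fun x => α * f x))
      ↔ 0 < P {b | ∃ f : X → ℂ, MemLp f 2 (m b) ∧ ¬ (f =ᵐ[m b] 0) ∧
          (fun x => f (T x)) =ᵐ[m b] (fun x => α * f x)} := by
  subst hdec
  have hTm : Measurable (⇑T) := T.continuous.measurable
  constructor
  · rintro ⟨f, hf2, hfne, hfeig⟩
    by_contra h0
    have hPS0 : P {b | ∃ f : X → ℂ, MemLp f 2 (m b) ∧ ¬ (f =ᵐ[m b] 0) ∧
        (fun x => f (T x)) =ᵐ[m b] (fun x => α * f x)} = 0 :=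
      le_antisymm (not_lt.1 h0) (by positivity)
    set g := hf2.1.mk f with hgdef
    have hgsm : StronglyMeasurable g := hf2.1.stronglyMeasurable_mk
    have hfg : f =ᵐ[P.bind m] g := hf2.1.ae_eq_mk
    have hg2 : MemLp g 2 (P.bind m) := (memLp_congr_ae hfg).1 hf2
    have hgT : (f ∘ ⇑T) =ᵐ[P.bind m] (g ∘ ⇑T) :=
      hT.quasiMeasurePreserving.ae_eq_comp hfg
    have hgeig : (fun x => g (T x)) =ᵐ[P.bind m] fun x => α * g x := by
      filter_upwards [hgT, hfeig, hfg] with x h1 h2 h3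
      calc g (T x) = f (T x) := (h1 : f (T x) = g (T x)).symm
        _ = α * f x := h2
        _ = α * g x := by rw [h3]
    have htrans := (ae_eq_transfer hm (hgsm.measurable.comp hTm)
      (hgsm.measurable.const_mul α)).1 hgeig
    have hmem := fiber_memℒp hm hgsm hg2
    have hnotS : ∀ᵐ b ∂P, b ∉ {b | ∃ f : X → ℂ, MemLp f 2 (m b) ∧ ¬ (f =ᵐ[m b] 0) ∧
        (fun x => f (T x)) =ᵐ[m b] (fun x => α * f x)} := by
      rw [ae_iff]
      convert hPS0 using 2
      ext b
      simp
    have hzero : ∀ᵐ b ∂P, g =ᵐ[m b] 0 := by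
      filter_upwards [htrans, hmem, hnotS] with b h1 h2 h3
      by_contra hne
      exact h3 ⟨g, h2, hne, h1⟩
    have hgz : g =ᵐ[P.bind m] 0 :=
      (ae_eq_transfer hm hgsm.measurable measurable_const).2 hzero
    exact hfne (hfg.trans hgz)
  · intro hpos
    obtain ⟨u, hu⟩ := TopologicalSpace.exists_dense_seq C(X, ℂ)
    set β := (starRingEnd ℂ) α with hβdef
    have hβ : ‖β‖ = 1 := by rw [RCLike.norm_conj]; exact hα
    have hβα : β * α = 1 := by
      rw [mul_comm, Complex.mul_conj]
      norm_cast
      rw [Complex.normSq_eq_norm_sq, hα]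
      norm_num
    have hαβ : ∀ t : ℂ, α * (β * t) = t := fun t => by
      rw [← mul_assoc, mul_comm α β, hβα, one_mul]
    have hTpb : MeasurePreserving (⇑T) (P.bind m) (P.bind m) := hT
    have hVnorm : ‖β • koopman hTpb‖ ≤ 1 := norm_koopman_le hTpb hβ
    set G : ℕ → Lp ℂ 2 (P.bind m) :=
      fun k => ContinuousMap.toLp (𝕜 := ℂ) (p := 2) (μ := P.bind m) (u k) with hGdef
    set Q : ℕ → Lp ℂ 2 (P.bind m) := fun k =>
      ↑(Submodule.orthogonalProjectionOnto ((β • koopman hTpb).eqLocus (1 : Lp ℂ 2 (P.bind m) →L[ℂ] Lp ℂ 2 (P.bind m))) (G k)) with hQdef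
    have hVfix : ∀ k, (β • koopman hTpb) (Q k) = Q k := by
      intro k
      have hmem := (Submodule.orthogonalProjectionOnto
        ((β • koopman hTpb).eqLocus (1 : Lp ℂ 2 (P.bind m) →L[ℂ] Lp ℂ 2 (P.bind m))) (G k)).2
      rw [LinearMap.mem_eqLocus] at hmem
      simpa [hQdef] using hmem
    set q : ℕ → X → ℂ := fun k => ⇑(Q k) with hqdef
    have hqsm : ∀ k, StronglyMeasurable (q k) := fun k => Lp.stronglyMeasurable _
    have heig : ∀ k, (fun x => q k (T x)) =ᵐ[P.bind m] fun x => α * q k x := by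
      intro k
      have h1 := coeFn_V hTpb β (Q k)
      rw [hVfix k] at h1
      filter_upwards [h1] with x hx
      simp only [hqdef]
      rw [hx, smul_eq_mul, hαβ]
    have hkey : ∃ k, ¬ (q k =ᵐ[P.bind m] (0 : X → ℂ)) := by
      by_contra hall
      push_neg at hall
      -- global mean ergodic convergence and choice of a rapidly convergent subsequence
      have htends : ∀ k, Tendsto (fun N : ℕ =>
          ‖birkhoffAverage ℂ (⇑(β • koopman hTpb)) _root_.id N (G k) - Q k‖) atTop (𝓝 0) := by
        intro k
        exact tendsto_iff_norm_sub_tendsto_zero.1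
          ((β • koopman hTpb).tendsto_birkhoffAverage_orthogonalProjection hVnorm (G k))
      have hNex : ∀ k j : ℕ, ∃ n, j ≤ n ∧
          ‖birkhoffAverage ℂ (⇑(β • koopman hTpb)) _root_.id n (G k) - Q k‖ < (2⁻¹:ℝ)^j := by
        intro k j
        have hev := (htends k).eventually (gt_mem_nhds (pow_pos (by norm_num : (0:ℝ) < 2⁻¹) j))
        exact ((eventually_ge_atTop j).and hev).exists
      choose N hNge hNlt using hNex
      set uN : ℕ → ℕ → X → ℂ :=
        fun k n x => (n:ℂ)⁻¹ • ∑ i ∈ Finset.range n, β ^ i • u k (T^[i] x) with huNdef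
      set v : ℕ → ℕ → X → ℂ := fun k j x => uN k (N k j) x - q k x with hvdef
      have huNm : ∀ k n, Measurable (uN k n) := by
        intro k n
        simp only [huNdef]
        have h1 : ∀ i : ℕ, Continuous fun x => β ^ i • u k (T^[i] x) := fun i =>
          ((u k).continuous.comp (T.continuous.iterate i)).const_smul (β ^ i)
        have h2 : Continuous fun x => ∑ i ∈ Finset.range n, β ^ i • u k (T^[i] x) :=
          continuous_finset_sum _ (fun i _ => h1 i)
        exact (h2.const_smul ((n:ℂ)⁻¹)).measurable
      have hvm : ∀ k j, Measurable (v k j) := fun k j =>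
        (huNm k (N k j)).sub (hqsm k).measurable
      have hAcoe : ∀ (ν : Measure X) (hν : MeasurePreserving (⇑T) ν ν) (k n : ℕ)
          (w : Lp ℂ 2 ν), ⇑w =ᵐ[ν] ⇑(u k) →
          ⇑(birkhoffAverage ℂ (⇑(β • koopman hν)) _root_.id n w) =ᵐ[ν] uN k n :=
        fun ν hν k n w hw => coeFn_birkhoffAverage hν β n w hw
      -- global control of the subsequence errors
      have hglob : ∀ k j, L2I (v k j) (P.bind m) ≤ (2⁻¹ : ℝ≥0∞)^j := by
        intro k j
        have hA := hAcoe (P.bind m) hTpb k (N k j) (G k)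
          (ContinuousMap.coeFn_toLp (P.bind m) (u k))
        have he1 : eLpNorm (v k j) 2 (P.bind m) = ENNReal.ofReal
            ‖birkhoffAverage ℂ (⇑(β • koopman hTpb)) _root_.id (N k j) (G k) - Q k‖ := by
          rw [← eLpNorm_coeFn_eq]
          refine eLpNorm_congr_ae ?_
          filter_upwards [Lp.coeFn_sub
            (birkhoffAverage ℂ (⇑(β • koopman hTpb)) _root_.id (N k j) (G k)) (Q k), hA]
            with x h1 h2
          simp only [hvdef, hqdef]
          rw [h1, Pi.sub_apply, h2]
        rw [L2I_eq_sq, he1]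
        have h01 : (0:ℝ) ≤ (2⁻¹:ℝ)^j := by positivity
        calc (ENNReal.ofReal
              ‖birkhoffAverage ℂ (⇑(β • koopman hTpb)) _root_.id (N k j) (G k) - Q k‖) ^ (2:ℝ)
            ≤ (ENNReal.ofReal ((2⁻¹:ℝ)^j)) ^ (2:ℝ) :=
              ENNReal.rpow_le_rpow (ENNReal.ofReal_le_ofReal (hNlt k j).le) (by norm_num)
          _ = ENNReal.ofReal (((2⁻¹:ℝ)^j) ^ (2:ℝ)) :=
              ENNReal.ofReal_rpow_of_nonneg h01 (by norm_num)
          _ ≤ ENNReal.ofReal ((2⁻¹:ℝ)^j) := by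
              apply ENNReal.ofReal_le_ofReal
              have h1 : ((2⁻¹:ℝ)^j) ≤ 1 := pow_le_one₀ (by norm_num) (by norm_num)
              calc ((2⁻¹:ℝ)^j)^(2:ℝ) = ((2⁻¹:ℝ)^j)^(2:ℕ) := by
                    rw [← Real.rpow_natCast ((2⁻¹:ℝ)^j) 2]; norm_num
                _ = ((2⁻¹:ℝ)^j) * ((2⁻¹:ℝ)^j) := sq _
                _ ≤ 1 * ((2⁻¹:ℝ)^j) := by nlinarith
                _ = (2⁻¹:ℝ)^j := one_mul _
          _ = (2⁻¹ : ℝ≥0∞)^j := by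
              rw [ENNReal.ofReal_pow (by norm_num)]
              congr 1
              rw [ENNReal.ofReal_inv_of_pos (by norm_num)]
              norm_num
      have hsumfin : ∀ k, ∑' j, L2I (v k j) (P.bind m) ≠ ⊤ := by
        intro k
        refine ne_top_of_le_ne_top ?_ (ENNReal.tsum_le_tsum (hglob k))
        rw [ENNReal.tsum_geometric, ENNReal.one_sub_inv_two]
        simp
      have hbmeas : ∀ k j, Measurable fun b => L2I (v k j) (m b) := fun k j =>
        (Measure.measurable_lintegral (L2I_measurable (hvm k j))).comp hm
      have hae3 : ∀ᵐ b ∂P, ∀ k, Tendsto (fun j => L2I (v k j) (m b)) atTop (𝓝 0) := by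
        rw [ae_all_iff]
        intro k
        have h1 : ∫⁻ b, ∑' j, L2I (v k j) (m b) ∂P ≠ ⊤ := by
          rw [lintegral_tsum (fun j => (hbmeas k j).aemeasurable)]
          have he : ∀ j, ∫⁻ b, L2I (v k j) (m b) ∂P = L2I (v k j) (P.bind m) :=
            fun j => (L2I_bind hm (hvm k j)).symm
          rw [tsum_congr he]
          exact hsumfin k
        filter_upwards [ae_lt_top (Measurable.ennreal_tsum (fun j => hbmeas k j)) h1] with b hb
        exact ENNReal.tendsto_atTop_zero_of_tsum_ne_top hb.ne
      have hae1 : ∀ᵐ b ∂P, ∀ k, q k =ᵐ[m b] 0 := ae_all_iff.2 fun k =>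
        (ae_eq_transfer hm (hqsm k).measurable measurable_const).1 (hall k)
      have hae2 : ∀ᵐ b ∂P, ∀ k, MemLp (q k) 2 (m b) := ae_all_iff.2 fun k =>
        fiber_memℒp hm (hqsm k) (Lp.memLp (Q k))
      have hfreq : ∃ᵐ b ∂P, b ∈ {b | ∃ f : X → ℂ, MemLp f 2 (m b) ∧ ¬ (f =ᵐ[m b] 0) ∧
          (fun x => f (T x)) =ᵐ[m b] (fun x => α * f x)} := by
        intro hcon
        refine absurd ?_ hpos.ne'
        have h0 := ae_iff.1 hcon
        simpa using h0
      obtain ⟨b, hbS, ⟨hb1, hb2⟩, hb3⟩ :=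
        (hfreq.and_eventually ((hae1.and hae2).and hae3)).exists
      haveI := hprob b
      have hTb : MeasurePreserving (⇑T) (m b) (m b) := (herg b).toMeasurePreserving
      have hVbnorm : ‖β • koopman hTb‖ ≤ 1 := norm_koopman_le hTb hβ
      have hproj0 : ∀ k, (↑(Submodule.orthogonalProjectionOnto ((β • koopman hTb).eqLocus (1 : Lp ℂ 2 (m b) →L[ℂ] Lp ℂ 2 (m b)))
          (ContinuousMap.toLp 2 (m b) ℂ (u k))) : Lp ℂ 2 (m b)) = 0 := by
        intro k
        have hq2 : MemLp (q k) 2 (m b) := hb2 k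
        have hNmono : Tendsto (N k) atTop atTop := tendsto_atTop_mono (hNge k) tendsto_id
        have hcongr : ∀ j, eLpNorm
            ((⇑(birkhoffAverage ℂ (⇑(β • koopman hTb)) _root_.id (N k j)
              (ContinuousMap.toLp 2 (m b) ℂ (u k))) : X → ℂ) - q k) 2 (m b)
            = L2I (v k j) (m b) ^ (1/2:ℝ) := by
          intro j
          rw [← eLpNorm_eq_L2I]
          refine eLpNorm_congr_ae ?_
          have hA := hAcoe (m b) hTb k (N k j) (ContinuousMap.toLp 2 (m b) ℂ (u k))
            (ContinuousMap.coeFn_toLp (m b) (u k))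
          filter_upwards [hA] with x h2
          simp only [hvdef, Pi.sub_apply]
          rw [h2]
        have htend0 : Tendsto (fun j => eLpNorm
            ((⇑(birkhoffAverage ℂ (⇑(β • koopman hTb)) _root_.id (N k j)
              (ContinuousMap.toLp 2 (m b) ℂ (u k))) : X → ℂ) - q k) 2 (m b)) atTop (𝓝 0) := by
          simp only [hcongr]
          exact tendsto_rpow_half (hb3 k)
        have hpe := proj_eq_toLp hTb hVbnorm (ContinuousMap.toLp 2 (m b) ℂ (u k)) hq2
          (N k) hNmono htend0
        rw [hpe]
        exact Lp.eq_zero_iff_ae_eq_zero.2 (hq2.coeFn_toLp.trans (hb1 k))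
      obtain ⟨h, hh2, hhne, hheig⟩ := hbS
      exact endgame hTb hβα u hu hproj0 h hh2 hhne hheig
    obtain ⟨k, hk⟩ := hkey
    exact ⟨q k, Lp.memLp (Q k), hk, heig k⟩
end

section
/- Let A be any class of measure-preserving systems closed under isomorphism. If T ∈ A⊥ is a multiplier of A⊥, then for every n ≥ 1 and every n-fold self-joining λ of T, the system (T^{×n}, λ) belongs to A⊥ and is again a multiplier of A⊥. -/
open MeasureTheory

/-- A measure-preserving system: an automorphism of a standard Borel probability
space. -/
structure MPS where
  X : Type
  mX : MeasurableSpace X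
  sb : @StandardBorelSpace X mX
  μ : @Measure X mX
  T : X → X
  prob : @IsProbabilityMeasure X mX μ
  mp : @MeasurePreserving X X mX mX T μ μ

attribute [instance] MPS.mX MPS.sb MPS.prob

/-- `lam` is a joining of the systems `S₁` and `S₂`. -/
def MPS.IsJoining (S₁ S₂ : MPS) (lam : Measure (S₁.X × S₂.X)) : Prop :=
  IsProbabilityMeasure lam ∧ MeasurePreserving (Prod.map S₁.T S₂.T) lam lam ∧
    lam.map Prod.fst = S₁.μ ∧ lam.map Prod.snd = S₂.μ

/-- Two systems are disjoint if their only joining is the product measure. -/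
def MPS.Disj (S₁ S₂ : MPS) : Prop :=
  ∀ lam : Measure (S₁.X × S₂.X), S₁.IsJoining S₂ lam → lam = S₁.μ.prod S₂.μ

/-- The class `A⊥` of systems disjoint from every member of `A`. -/
def MPS.perp (A : Set MPS) : Set MPS := {S | ∀ S' ∈ A, S.Disj S'}

/-- The system determined by a joining of two systems. -/
def MPS.joinSys (S₁ S₂ : MPS) (lam : Measure (S₁.X × S₂.X))
    (h : S₁.IsJoining S₂ lam) : MPS :=
  ⟨S₁.X × S₂.X, inferInstance, inferInstance, lam, Prod.map S₁.T S₂.T, h.1, h.2.1⟩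

/-- `S` is a multiplier of `A⊥`: it belongs to `A⊥` and every joining of `S` with a
member of `A⊥` yields again a member of `A⊥`. -/
def MPS.IsMultiplier (A : Set MPS) (S : MPS) : Prop :=
  S ∈ MPS.perp A ∧ ∀ S' ∈ MPS.perp A, ∀ lam, ∀ h : S.IsJoining S' lam,
    S.joinSys S' lam h ∈ MPS.perp A

/-- `lam` is an `n`-fold self-joining of `S`. -/
def MPS.IsSelfJoining (S : MPS) (n : ℕ) (lam : Measure (Fin n → S.X)) : Prop :=
  IsProbabilityMeasure lam ∧ MeasurePreserving (fun x i => S.T (x i)) lam lam ∧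
    ∀ i, lam.map (fun x => x i) = S.μ

/-- The system determined by an `n`-fold self-joining of `S`. -/
def MPS.selfJoinSys (S : MPS) (n : ℕ) (lam : Measure (Fin n → S.X))
    (h : S.IsSelfJoining n lam) : MPS :=
  ⟨Fin n → S.X, inferInstance, inferInstance, lam, fun x i => S.T (x i), h.1, h.2.1⟩

/-- Isomorphism of measure-preserving systems. -/
def MPS.Isomorphic (S₁ S₂ : MPS) : Prop :=
  ∃ e : S₁.X ≃ S₂.X, Measurable e ∧ Measurable e.symm ∧
    MeasurePreserving e S₁.μ S₂.μ ∧
    (fun x => S₂.T (e x)) =ᵐ[S₁.μ] (fun x => e (S₁.T x))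

/-- `S₂` is a factor of `S₁`. -/
def MPS.IsFactor (S₁ S₂ : MPS) : Prop :=
  ∃ F : S₁.X → S₂.X, MeasurePreserving F S₁.μ S₂.μ ∧
    (fun x => F (S₁.T x)) =ᵐ[S₁.μ] (fun x => S₂.T (F x))
namespace MPS

theorem fst_ae_lift {α γ δ : Type} [MeasurableSpace α] [MeasurableSpace γ] [MeasurableSpace δ]
    {lam : Measure (α × γ)} {μ : Measure α} (hfst : lam.map Prod.fst = μ)
    {u v : α → δ} (huv : u =ᵐ[μ] v) :
    (fun p : α × γ => u p.1) =ᵐ[lam] (fun p => v p.1) :=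
  ae_eq_comp (measurable_fst.aemeasurable) (by rwa [hfst])

theorem mp_symm {α β : Type} [MeasurableSpace α] [MeasurableSpace β] (e : α ≃ β)
    (me : Measurable e) (mes : Measurable e.symm) {μ : Measure α} {ν : Measure β}
    (h : MeasurePreserving e μ ν) : MeasurePreserving e.symm ν μ := by
  refine ⟨mes, ?_⟩
  rw [← h.map_eq, Measure.map_map mes me,
    show (⇑e.symm ∘ ⇑e) = id from funext fun x => e.symm_apply_apply x, Measure.map_id]

theorem Isomorphic.symm {S₁ S₂ : MPS} (h : S₁.Isomorphic S₂) : S₂.Isomorphic S₁ := by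
  obtain ⟨e, me, mes, hmp, heq⟩ := h
  have hmps : MeasurePreserving e.symm S₂.μ S₁.μ := mp_symm e me mes hmp
  refine ⟨e.symm, mes, by simpa using me, hmps, ?_⟩
  have h1 : (fun x => S₂.T (e x)) ∘ e.symm =ᵐ[S₂.μ] (fun x => e (S₁.T x)) ∘ e.symm := by
    refine ae_eq_comp hmps.aemeasurable ?_
    rwa [hmps.map_eq]
  filter_upwards [h1] with y hy
  simp only [Function.comp_apply, Equiv.apply_symm_apply] at hy
  simp [hy]

theorem isJoining_map {S₁ S₂ S' : MPS} (e : S₁.X ≃ S₂.X) (me : Measurable e)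
    (hmp : MeasurePreserving e S₁.μ S₂.μ)
    (heq : (fun x => S₂.T (e x)) =ᵐ[S₁.μ] (fun x => e (S₁.T x)))
    {lam : Measure (S₁.X × S'.X)} (hl : S₁.IsJoining S' lam) :
    S₂.IsJoining S' (lam.map (Prod.map e id)) := by
  obtain ⟨hp, hinv, hfst, hsnd⟩ := hl
  haveI : IsProbabilityMeasure lam := hp
  have mE : Measurable (Prod.map e (id : S'.X → S'.X)) := me.prodMap measurable_id
  have mT₁ : Measurable (Prod.map S₁.T S'.T) := S₁.mp.measurable.prodMap S'.mp.measurable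
  have mT₂ : Measurable (Prod.map S₂.T S'.T) := S₂.mp.measurable.prodMap S'.mp.measurable
  have hcomm : (Prod.map S₂.T S'.T ∘ Prod.map e id) =ᵐ[lam]
      (Prod.map e id ∘ Prod.map S₁.T S'.T) := by
    filter_upwards [fst_ae_lift hfst heq] with p hp2
    show (S₂.T (e p.1), S'.T p.2) = (e (S₁.T p.1), S'.T p.2)
    rw [hp2]
  refine ⟨Measure.isProbabilityMeasure_map mE.aemeasurable, ⟨mT₂, ?_⟩, ?_, ?_⟩
  · calc Measure.map (Prod.map S₂.T S'.T) (lam.map (Prod.map e id))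
        = lam.map (Prod.map S₂.T S'.T ∘ Prod.map e id) := Measure.map_map mT₂ mE
      _ = lam.map (Prod.map e id ∘ Prod.map S₁.T S'.T) := Measure.map_congr hcomm
      _ = (lam.map (Prod.map S₁.T S'.T)).map (Prod.map e id) := (Measure.map_map mE mT₁).symm
      _ = lam.map (Prod.map e id) := by rw [hinv.map_eq]
  · rw [Measure.map_map measurable_fst mE,
      show (Prod.fst ∘ Prod.map e (id : S'.X → S'.X)) = ⇑e ∘ Prod.fst from rfl,
      ← Measure.map_map me measurable_fst, hfst, hmp.map_eq]
  · rw [Measure.map_map measurable_snd mE,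
      show (Prod.snd ∘ Prod.map e (id : S'.X → S'.X)) = Prod.snd from rfl, hsnd]

end MPS
namespace MPS

theorem joinSys_iso {S₁ S₂ S' : MPS} (e : S₁.X ≃ S₂.X) (me : Measurable e)
    (mes : Measurable e.symm) (hmp : MeasurePreserving e S₁.μ S₂.μ)
    (heq : (fun x => S₂.T (e x)) =ᵐ[S₁.μ] (fun x => e (S₁.T x)))
    {lam : Measure (S₁.X × S'.X)} (hl : S₁.IsJoining S' lam)
    (hl2 : S₂.IsJoining S' (lam.map (Prod.map e id))) :
    (S₁.joinSys S' lam hl).Isomorphic (S₂.joinSys S' (lam.map (Prod.map e id)) hl2) := by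
  refine ⟨Equiv.prodCongr e (Equiv.refl S'.X), ?_, ?_, ?_, ?_⟩
  · exact me.prodMap measurable_id
  · exact mes.prodMap measurable_id
  · exact ⟨me.prodMap measurable_id, rfl⟩
  · filter_upwards [fst_ae_lift hl.2.2.1 heq] with p hp2
    show (S₂.T (e p.1), S'.T p.2) = (e (S₁.T p.1), S'.T p.2)
    rw [hp2]

theorem disj_of_iso {S₁ S₂ S' : MPS} (h : S₁.Isomorphic S₂) (hd : S₁.Disj S') : S₂.Disj S' := by
  obtain ⟨e, me, mes, hmp, heq⟩ := h.symm
  intro lam hl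
  have hl' := isJoining_map e me hmp heq hl
  have hprod := hd _ hl'
  have mE : Measurable (Prod.map e (id : S'.X → S'.X)) := me.prodMap measurable_id
  have mEs : Measurable (Prod.map e.symm (id : S'.X → S'.X)) := mes.prodMap measurable_id
  have hlam : lam = (lam.map (Prod.map e id)).map (Prod.map e.symm id) := by
    rw [Measure.map_map mEs mE,
      show (Prod.map e.symm (id : S'.X → S'.X) ∘ Prod.map e id) = id from
        funext fun p => Prod.ext (e.symm_apply_apply p.1) rfl,
      Measure.map_id]
  haveI : IsProbabilityMeasure S'.μ := S'.prob
  rw [hlam, hprod, ← Measure.map_prod_map _ _ mes measurable_id,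
    (mp_symm e me mes hmp).map_eq, Measure.map_id]

theorem perp_of_iso {A : Set MPS} {S₁ S₂ : MPS} (h : S₁.Isomorphic S₂)
    (h1 : S₁ ∈ MPS.perp A) : S₂ ∈ MPS.perp A :=
  fun S' hS' => disj_of_iso h (h1 S' hS')

theorem multiplier_of_iso {A : Set MPS} {S₁ S₂ : MPS} (h : S₁.Isomorphic S₂)
    (hm : IsMultiplier A S₁) : IsMultiplier A S₂ := by
  refine ⟨perp_of_iso h hm.1, ?_⟩
  intro S' hS' lam hl
  obtain ⟨e, me, mes, hmp, heq⟩ := h.symm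
  have hl' := isJoining_map (S' := S') e me hmp heq hl
  have hmem := hm.2 S' hS' _ hl'
  exact perp_of_iso (joinSys_iso e me mes hmp heq hl hl').symm hmem

end MPS
namespace MPS

theorem isMultiplier_join (A : Set MPS) {S₁ S₂ : MPS} (h₁ : IsMultiplier A S₁)
    (h₂ : IsMultiplier A S₂) {ρ : Measure (S₁.X × S₂.X)} (hρ : S₁.IsJoining S₂ ρ) :
    IsMultiplier A (S₁.joinSys S₂ ρ hρ) := by
  refine ⟨h₁.2 S₂ h₂.1 ρ hρ, ?_⟩
  intro S' hS' σ hσ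
  change Measure ((S₁.X × S₂.X) × S'.X) at σ
  obtain ⟨hσp, hσinv, hσfst, hσsnd⟩ := hσ
  haveI : IsProbabilityMeasure σ := hσp
  have hinv' : Measure.map (Prod.map (Prod.map S₁.T S₂.T) S'.T) σ = σ := hσinv.map_eq
  have hσfst' : Measure.map (Prod.fst : (S₁.X × S₂.X) × S'.X → S₁.X × S₂.X) σ = ρ := hσfst
  set E : (S₁.X × S₂.X) × S'.X ≃ᵐ S₁.X × S₂.X × S'.X :=
    MeasurableEquiv.prodAssoc with hE
  have mE : Measurable E := E.measurable
  have mEs : Measurable E.symm := E.symm.measurable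
  set σ' := σ.map E with hσ'def
  set θ := σ'.map Prod.snd with hθdef
  have hθσ : θ = σ.map (Prod.snd ∘ ⇑E) := by rw [hθdef, hσ'def, Measure.map_map measurable_snd mE]
  have mTbig : Measurable (Prod.map (Prod.map S₁.T S₂.T) S'.T) := hσinv.measurable
  have mT₂' : Measurable (Prod.map S₂.T S'.T) := S₂.mp.measurable.prodMap S'.mp.measurable
  have mg : Measurable (Prod.snd ∘ ⇑E) := measurable_snd.comp mE
  have hθ : S₂.IsJoining S' θ := by
    refine ⟨by rw [hθσ]; exact Measure.isProbabilityMeasure_map mg.aemeasurable, ⟨mT₂', ?_⟩, ?_, ?_⟩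
    · rw [hθσ, Measure.map_map mT₂' mg,
        show (Prod.map S₂.T S'.T ∘ (Prod.snd ∘ ⇑E))
            = (Prod.snd ∘ ⇑E) ∘ Prod.map (Prod.map S₁.T S₂.T) S'.T from funext fun p => rfl,
        ← Measure.map_map mg mTbig, hinv']
    · rw [hθσ, Measure.map_map measurable_fst mg,
        show (Prod.fst ∘ (Prod.snd ∘ ⇑E)) = (Prod.snd ∘ (Prod.fst : (S₁.X × S₂.X) × S'.X → S₁.X × S₂.X)) from funext fun p => rfl,
        ← Measure.map_map measurable_snd measurable_fst, hσfst']
      exact hρ.2.2.2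
    · rw [hθσ, Measure.map_map measurable_snd mg,
        show (Prod.snd ∘ (Prod.snd ∘ ⇑E)) = (Prod.snd : (S₁.X × S₂.X) × S'.X → S'.X) from funext fun p => rfl]
      exact hσsnd
  have hW := h₂.2 S' hS' θ hθ
  have mT₁W : Measurable (Prod.map S₁.T (Prod.map S₂.T S'.T)) :=
    S₁.mp.measurable.prodMap mT₂'
  have hσ' : S₁.IsJoining (S₂.joinSys S' θ hθ) σ' := by
    refine ⟨Measure.isProbabilityMeasure_map mE.aemeasurable, ⟨mT₁W, ?_⟩, ?_, rfl⟩
    · show Measure.map (Prod.map S₁.T (Prod.map S₂.T S'.T)) σ' = σ'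
      rw [hσ'def, Measure.map_map mT₁W mE,
        show (Prod.map S₁.T (Prod.map S₂.T S'.T) ∘ ⇑E)
            = ⇑E ∘ Prod.map (Prod.map S₁.T S₂.T) S'.T from funext fun p => rfl,
        ← Measure.map_map mE mTbig, hinv']
    · show Measure.map Prod.fst σ' = S₁.μ
      rw [hσ'def, Measure.map_map measurable_fst mE,
        show (Prod.fst ∘ ⇑E) = (Prod.fst ∘ (Prod.fst : (S₁.X × S₂.X) × S'.X → S₁.X × S₂.X)) from funext fun p => rfl,
        ← Measure.map_map measurable_fst measurable_fst, hσfst']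
      exact hρ.2.2.1
  have hmem := h₁.2 _ hW σ' hσ'
  refine perp_of_iso (S₁ := S₁.joinSys (S₂.joinSys S' θ hθ) σ' hσ') ?_ hmem
  refine ⟨E.symm.toEquiv, mEs, E.symm.symm.measurable, ⟨mEs, ?_⟩, ?_⟩
  · show Measure.map (⇑E.symm) σ' = σ
    rw [hσ'def, Measure.map_map mEs mE,
      show (⇑E.symm ∘ ⇑E) = id from funext fun p => E.symm_apply_apply p, Measure.map_id]
  · exact Filter.Eventually.of_forall fun p => rfl

end MPS
/-- Let `A` be any class of measure-preserving systems closed under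
isomorphism. If `T ∈ A⊥` is a multiplier of `A⊥`, then for every `n ≥ 1` and every
`n`-fold self-joining `lam` of `T`, the system `(T^{×n}, lam)` belongs to `A⊥` and is
again a multiplier of `A⊥`. -/
theorem selfJoining_of_multiplier_is_multiplier
    (A : Set MPS) (hA : ∀ S₁ S₂ : MPS, S₁.Isomorphic S₂ → (S₁ ∈ A ↔ S₂ ∈ A))
    (T : MPS) (hT : MPS.IsMultiplier A T)
    (n : ℕ) (hn : 1 ≤ n)
    (lam : Measure (Fin n → T.X)) (h : T.IsSelfJoining n lam) :
    T.selfJoinSys n lam h ∈ MPS.perp A ∧ MPS.IsMultiplier A (T.selfJoinSys n lam h) := by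
  have key : ∀ n, 1 ≤ n → ∀ (lam : Measure (Fin n → T.X)) (h : T.IsSelfJoining n lam),
      MPS.IsMultiplier A (T.selfJoinSys n lam h) := by
    intro n hn
    induction n, hn using Nat.le_induction with
    | base =>
      intro lam h
      haveI : IsProbabilityMeasure lam := h.1
      set F : (Fin 1 → T.X) ≃ᵐ T.X := MeasurableEquiv.funUnique (Fin 1) T.X with hF
      have hmapF : lam.map F = T.μ := h.2.2 default
      refine MPS.multiplier_of_iso (S₁ := T) ?_ hT
      refine ⟨F.symm.toEquiv, F.symm.measurable, F.symm.symm.measurable, ⟨F.symm.measurable, ?_⟩, ?_⟩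
      · show Measure.map (⇑F.symm) T.μ = lam
        rw [← hmapF, Measure.map_map F.symm.measurable F.measurable,
          show (⇑F.symm ∘ ⇑F) = id from funext fun p => F.symm_apply_apply p, Measure.map_id]
      · exact Filter.Eventually.of_forall fun x => rfl
    | succ n hn IH =>
      intro lam h
      haveI : IsProbabilityMeasure lam := h.1
      have hinv : Measure.map (fun x i => T.T (x i)) lam = lam := h.2.1.map_eq
      have mTpi : Measurable (fun (x : Fin (n+1) → T.X) i => T.T (x i)) := h.2.1.measurable
      have mTpi' : Measurable (fun (y : Fin n → T.X) j => T.T (y j)) :=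
        measurable_pi_iff.2 fun j => T.mp.measurable.comp (measurable_pi_apply j)
      set E : (Fin (n+1) → T.X) ≃ᵐ T.X × (Fin n → T.X) :=
        MeasurableEquiv.piFinSuccAbove (fun _ => T.X) 0 with hE
      have mE : Measurable E := E.measurable
      have mEs : Measurable E.symm := E.symm.measurable
      set σ := lam.map E with hσdef
      set ν := σ.map Prod.snd with hνdef
      have hνσ : ν = lam.map (Prod.snd ∘ ⇑E) := by
        rw [hνdef, hσdef, Measure.map_map measurable_snd mE]
      have mg : Measurable (Prod.snd ∘ ⇑E) := measurable_snd.comp mE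
      have hν : T.IsSelfJoining n ν := by
        refine ⟨by rw [hνσ]; exact Measure.isProbabilityMeasure_map mg.aemeasurable, ⟨mTpi', ?_⟩, ?_⟩
        · rw [hνσ, Measure.map_map mTpi' mg,
            show ((fun (y : Fin n → T.X) j => T.T (y j)) ∘ (Prod.snd ∘ ⇑E))
                = (Prod.snd ∘ ⇑E) ∘ (fun x i => T.T (x i)) from funext fun p => rfl,
            ← Measure.map_map mg mTpi, hinv]
        · intro j
          rw [hνσ, Measure.map_map (measurable_pi_apply j) mg,
            show ((fun y => y j) ∘ (Prod.snd ∘ ⇑E))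
                = (fun (x : Fin (n+1) → T.X) => x ((0 : Fin (n+1)).succAbove j)) from
              funext fun p => rfl]
          exact h.2.2 _
      have mTW : Measurable (Prod.map T.T (fun (y : Fin n → T.X) j => T.T (y j))) :=
        T.mp.measurable.prodMap mTpi'
      have hσ : T.IsJoining (T.selfJoinSys n ν hν) σ := by
        refine ⟨Measure.isProbabilityMeasure_map mE.aemeasurable, ⟨mTW, ?_⟩, ?_, rfl⟩
        · show Measure.map (Prod.map T.T fun y j => T.T (y j)) σ = σ
          rw [hσdef, Measure.map_map mTW mE,
            show ((Prod.map T.T fun (y : Fin n → T.X) j => T.T (y j)) ∘ ⇑E)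
                = ⇑E ∘ (fun x i => T.T (x i)) from funext fun p => rfl,
            ← Measure.map_map mE mTpi, hinv]
        · show Measure.map Prod.fst σ = T.μ
          rw [hσdef, Measure.map_map measurable_fst mE,
            show (Prod.fst ∘ ⇑E) = (fun (x : Fin (n+1) → T.X) => x 0) from funext fun p => rfl]
          exact h.2.2 0
      have hmult := MPS.isMultiplier_join A hT (IH ν hν) hσ
      refine MPS.multiplier_of_iso ?_ hmult
      refine ⟨E.symm.toEquiv, mEs, E.symm.symm.measurable, ⟨mEs, ?_⟩, ?_⟩
      · show Measure.map (⇑E.symm) σ = lam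
        rw [hσdef, Measure.map_map mEs mE,
          show (⇑E.symm ∘ ⇑E) = id from funext fun p => E.symm_apply_apply p, Measure.map_id]
      · refine Filter.Eventually.of_forall fun p => ?_
        show (fun i => T.T (E.symm p i)) = E.symm (T.T p.1, fun j => T.T (p.2 j))
        simp only [hE, MeasurableEquiv.piFinSuccAbove_symm_apply, Fin.insertNthEquiv_apply]
        funext i
        refine Fin.succAboveCases 0 ?_ ?_ i
        · simp [Fin.consEquiv]
        · intro j
          simp [Fin.consEquiv]
  exact ⟨(key n hn lam h).1, key n hn lam h⟩
end

section
/- Let T be ergodic, G a compact abelian group with Haar measure λ_G, and φ : X → G a cocycle such that the skew product T_φ(x,g) = (Tx, φ(x)g) is ergodic with respect to μ ⊗ λ_G. Then μ ⊗ λ_G is the only T_φ-invariant probability measure on X × G projecting onto μ. -/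
open MeasureTheory Filter Set
open scoped ENNReal Topology Uniformity

set_option maxHeartbeats 2000000
set_option synthInstance.maxHeartbeats 1000000

section RUEAux

def rueCocycle {X G : Type*} [Monoid G] (T : X → X) (φ : X → G) : ℕ → X → G
  | 0, _ => 1
  | (n + 1), x => φ (T^[n] x) * rueCocycle T φ n x

lemma rue_iter {X G : Type*} [Monoid G] (T : X → X) (φ : X → G) :
    ∀ (n : ℕ) (p : X × G),
      (fun q : X × G => (T q.1, φ q.1 * q.2))^[n] p
        = (T^[n] p.1, rueCocycle T φ n p.1 * p.2) := by
  intro n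
  induction n with
  | zero => intro p; simp [rueCocycle]
  | succ n ih =>
    intro p
    rw [Function.iterate_succ_apply', ih p]
    show (T (T^[n] p.1), φ (T^[n] p.1) * (rueCocycle T φ n p.1 * p.2)) = _
    rw [rueCocycle, ← Function.iterate_succ_apply' T n p.1, mul_assoc]

lemma rue_integrable {α : Type*} [MeasurableSpace α] {f : α → ℝ} (hf : Measurable f)
    {C : ℝ} (hC : ∀ p, |f p| ≤ C) (ρ : Measure α) [IsFiniteMeasure ρ] : Integrable f ρ :=
  Integrable.mono' (integrable_const C) hf.aestronglyMeasurable
    (Filter.Eventually.of_forall fun p => by simpa [Real.norm_eq_abs] using hC p)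

lemma rue_avg_integral {α : Type*} [MeasurableSpace α] {S : α → α} {F : α → ℝ}
    (hFm : Measurable F) {C : ℝ} (hC : ∀ p, |F p| ≤ C)
    {ρ : Measure α} [IsProbabilityMeasure ρ] (hρ : MeasurePreserving S ρ ρ)
    (n : ℕ) (hn : 1 ≤ n) :
    ∫ p, birkhoffAverage ℝ S F n p ∂ρ = ∫ p, F p ∂ρ := by
  have hint : ∀ k : ℕ, Integrable (fun p => F (S^[k] p)) ρ := fun k =>
    rue_integrable (hFm.comp (hρ.measurable.iterate k)) (fun p => hC _) ρ
  have hik : ∀ k : ℕ, ∫ p, F (S^[k] p) ∂ρ = ∫ p, F p ∂ρ := by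
    intro k
    conv_rhs => rw [← (hρ.iterate k).map_eq]
    rw [integral_map ((hρ.measurable.iterate k)).aemeasurable]
    rw [(hρ.iterate k).map_eq]
    exact hFm.aestronglyMeasurable
  have h1 : ∀ p, birkhoffAverage ℝ S F n p
      = (n : ℝ)⁻¹ • ∑ k ∈ Finset.range n, F (S^[k] p) := fun p => rfl
  simp only [h1]
  rw [integral_smul, integral_finset_sum _ (fun k _ => hint k)]
  simp only [hik, Finset.sum_const, Finset.card_range, nsmul_eq_mul, smul_eq_mul]
  rw [← mul_assoc, inv_mul_cancel₀ (by exact_mod_cast Nat.one_le_iff_ne_zero.mp hn), one_mul]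

lemma rue_unifCont {G : Type*} [CommGroup G] [TopologicalSpace G] [IsTopologicalGroup G]
    [CompactSpace G] (u : G → ℝ) (hu : Continuous u) {ε : ℝ} (hε : 0 < ε) :
    ∃ O : Set G, IsOpen O ∧ (1 : G) ∈ O ∧ ∀ a b : G, b / a ∈ O → |u b - u a| ≤ ε := by
  letI : UniformSpace G := IsTopologicalGroup.rightUniformSpace G
  haveI : IsUniformGroup G := IsUniformGroup.of_compactSpace
  have hUC : UniformContinuous u := CompactSpace.uniformContinuous_of_continuous hu
  have hd : {p : ℝ × ℝ | dist p.1 p.2 < ε} ∈ 𝓤 ℝ := Metric.dist_mem_uniformity hε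
  have h2 : (fun p : G × G => (u p.1, u p.2)) ⁻¹' {p : ℝ × ℝ | dist p.1 p.2 < ε} ∈ 𝓤 G := hUC hd
  rw [uniformity_eq_comap_nhds_one] at h2
  obtain ⟨t, ht, hsub⟩ := h2
  obtain ⟨O, hOt, hO, h1O⟩ := mem_nhds_iff.1 ht
  refine ⟨O, hO, h1O, fun a b hab => ?_⟩
  have h3 : (a, b) ∈ (fun x : G × G => x.2 / x.1) ⁻¹' t := hOt hab
  have h4 := hsub h3
  simp only [Set.mem_preimage, Set.mem_setOf_eq] at h4
  rw [Real.dist_eq] at h4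
  rw [abs_sub_comm]
  exact h4.le

/-- Core lemma: integrals of `1_A ⊗ u` with `u` continuous agree for `ν` and `μ ⊗ μG`. -/
lemma rue_integral_eq
    {X : Type*} [MeasurableSpace X]
    {G : Type*} [CommGroup G] [TopologicalSpace G] [IsTopologicalGroup G]
    [CompactSpace G] [MeasurableSpace G] [BorelSpace G]
    (μ : Measure X) [IsProbabilityMeasure μ]
    (μG : Measure G) [μG.IsHaarMeasure] [IsProbabilityMeasure μG]
    (T : X → X) (φ : X → G)
    (hergext : Ergodic (fun p : X × G => (T p.1, φ p.1 * p.2)) (μ.prod μG))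
    (ν : Measure (X × G)) [IsProbabilityMeasure ν]
    (hν : MeasurePreserving (fun p : X × G => (T p.1, φ p.1 * p.2)) ν ν)
    (hproj : ν.map Prod.fst = μ)
    {A : Set X} (hA : MeasurableSet A) (u : G → ℝ) (hu : Continuous u) :
    ∫ p : X × G, A.indicator (fun _ => (1:ℝ)) p.1 * u p.2 ∂ν
      = ∫ p : X × G, A.indicator (fun _ => (1:ℝ)) p.1 * u p.2 ∂(μ.prod μG) := by
  classical
  set S : X × G → X × G := fun p => (T p.1, φ p.1 * p.2) with hSdef
  set m : Measure (X × G) := μ.prod μG with hmdef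
  have hSm : MeasurePreserving S m m := hergext.toMeasurePreserving
  set F : X × G → ℝ := fun p => A.indicator (fun _ => (1:ℝ)) p.1 * u p.2 with hFdef
  have hFm : Measurable F :=
    ((measurable_const.indicator hA).comp measurable_fst).mul (hu.measurable.comp measurable_snd)
  -- bound for u and F
  obtain ⟨M0, hM0⟩ : ∃ M0 : ℝ, ∀ g : G, ‖u g‖ ≤ M0 := by
    obtain ⟨C, hC⟩ := isCompact_univ.exists_bound_of_continuousOn hu.continuousOn
    exact ⟨C, fun g => hC g (mem_univ g)⟩
  set M : ℝ := max M0 1 with hMdef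
  have hM1 : (1:ℝ) ≤ M := le_max_right _ _
  have hMpos : (0:ℝ) < M := lt_of_lt_of_le one_pos hM1
  have hub : ∀ g, |u g| ≤ M := fun g => le_trans (by simpa [Real.norm_eq_abs] using hM0 g)
    (le_max_left _ _)
  have hind : ∀ x : X, |A.indicator (fun _ => (1:ℝ)) x| ≤ 1 := by
    intro x
    by_cases hx : x ∈ A <;> simp [Set.indicator_apply, hx]
  have hFb : ∀ p, |F p| ≤ M := by
    intro p
    rw [hFdef]
    calc |A.indicator (fun _ => (1:ℝ)) p.1 * u p.2|
        = |A.indicator (fun _ => (1:ℝ)) p.1| * |u p.2| := abs_mul _ _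
      _ ≤ 1 * M := mul_le_mul (hind p.1) (hub p.2) (abs_nonneg _) zero_le_one
      _ = M := one_mul M
  -- bound for Birkhoff averages
  have hinvn : ∀ n : ℕ, (n : ℝ)⁻¹ * (n : ℝ) ≤ 1 := by
    intro n
    rcases Nat.eq_zero_or_pos n with h | h
    · simp [h]
    · rw [inv_mul_cancel₀ (by exact_mod_cast h.ne')]
  have hbam : ∀ n : ℕ, Measurable (fun p => birkhoffAverage ℝ S F n p) := by
    intro n
    have : (fun p => birkhoffAverage ℝ S F n p)
        = fun p => (n : ℝ)⁻¹ * ∑ k ∈ Finset.range n, F (S^[k] p) := by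
      funext p; rw [birkhoffAverage, smul_eq_mul]; rfl
    rw [this]
    exact (Finset.measurable_sum _ fun k _ => hFm.comp (hSm.measurable.iterate k)).const_mul _
  have hAb : ∀ (n : ℕ) (p : X × G), |birkhoffAverage ℝ S F n p| ≤ M := by
    intro n p
    have h1 : |birkhoffSum S F n p| ≤ (n : ℝ) * M := by
      calc |∑ k ∈ Finset.range n, F (S^[k] p)|
          ≤ ∑ k ∈ Finset.range n, |F (S^[k] p)| := Finset.abs_sum_le_sum_abs _ _
        _ ≤ ∑ _k ∈ Finset.range n, M := Finset.sum_le_sum fun k _ => hFb _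
        _ = (n : ℝ) * M := by simp [mul_comm]
    calc |birkhoffAverage ℝ S F n p| = |(n : ℝ)⁻¹| * |birkhoffSum S F n p| := by
          rw [birkhoffAverage, smul_eq_mul, abs_mul]
      _ ≤ (n : ℝ)⁻¹ * ((n : ℝ) * M) := by
          refine mul_le_mul (le_of_eq (abs_of_nonneg (by positivity))) h1 (abs_nonneg _)
            (by positivity)
      _ = ((n : ℝ)⁻¹ * (n : ℝ)) * M := by ring
      _ ≤ 1 * M := mul_le_mul_of_nonneg_right (hinvn n) hMpos.le
      _ = M := one_mul M
  -- L² mean ergodic theorem setup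
  haveI : Fact ((1:ℝ≥0∞) ≤ 2) := ⟨one_le_two⟩
  have hFmem : MemLp F 2 m :=
    MemLp.of_bound hFm.aestronglyMeasurable M
      (Filter.Eventually.of_forall fun p => by simpa [Real.norm_eq_abs] using hFb p)
  set FL : Lp ℝ 2 m := hFmem.toLp F with hFLdef
  set UL : Lp ℝ 2 m →L[ℝ] Lp ℝ 2 m :=
    (Lp.compMeasurePreservingₗᵢ ℝ S hSm).toContinuousLinearMap with hULdef
  have hULapp : ∀ h : Lp ℝ 2 m, UL h = Lp.compMeasurePreserving S hSm h := fun h => rfl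
  have hULnorm : ‖UL‖ ≤ 1 := LinearIsometry.norm_toContinuousLinearMap_le _
  obtain ⟨P, hMET, hPfix⟩ : ∃ P : Lp ℝ 2 m,
      Tendsto (fun n => birkhoffAverage ℝ UL id n FL) atTop (𝓝 P) ∧ UL P = P := by
    refine ⟨_, UL.tendsto_birkhoffAverage_orthogonalProjection hULnorm FL, ?_⟩
    exact LinearMap.mem_eqLocus.mp (Submodule.coe_mem _)
  -- the limit is a.e. constant
  have hPae : (P : X × G → ℝ) ∘ S =ᵐ[m] (P : X × G → ℝ) := by
    have h1 : (Lp.compMeasurePreserving S hSm P : X × G → ℝ) =ᵐ[m] (P : X × G → ℝ) ∘ S :=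
      Lp.coeFn_compMeasurePreserving P hSm
    rw [← hULapp, hPfix] at h1
    exact h1.symm
  obtain ⟨cst, hcst⟩ := hergext.ae_eq_const_of_ae_eq_comp_ae (Lp.aestronglyMeasurable P) hPae
  -- identification of iterates of the Koopman operator
  have hUk : ∀ k : ℕ, ((UL^[k] FL : Lp ℝ 2 m) : X × G → ℝ) =ᵐ[m] fun p => F (S^[k] p) := by
    intro k
    induction k with
    | zero => simpa using hFmem.coeFn_toLp
    | succ k ih =>
      rw [Function.iterate_succ_apply']
      have h1 : ((UL (UL^[k] FL) : Lp ℝ 2 m) : X × G → ℝ)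
          =ᵐ[m] ((UL^[k] FL : Lp ℝ 2 m) : X × G → ℝ) ∘ S := by
        rw [hULapp]
        exact Lp.coeFn_compMeasurePreserving _ hSm
      refine h1.trans ?_
      have h2 : ((UL^[k] FL : Lp ℝ 2 m) : X × G → ℝ) ∘ S
          =ᵐ[m] (fun p => F (S^[k] p)) ∘ S :=
        hSm.quasiMeasurePreserving.ae_eq_comp ih
      refine h2.trans ?_
      refine Filter.Eventually.of_forall fun p => ?_
      simp only [Function.comp_apply]
      rw [← Function.iterate_succ_apply S k p, Function.iterate_succ_apply']
  have hBA : ∀ n : ℕ, ((birkhoffAverage ℝ UL id n FL : Lp ℝ 2 m) : X × G → ℝ)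
      =ᵐ[m] fun p => birkhoffAverage ℝ S F n p := by
    intro n
    have hsum : ∀ k : ℕ, ((birkhoffSum UL id k FL : Lp ℝ 2 m) : X × G → ℝ)
        =ᵐ[m] fun p => birkhoffSum S F k p := by
      intro k
      induction k with
      | zero =>
        simp only [birkhoffSum_zero']
        exact (Lp.coeFn_zero ℝ 2 m).trans (Filter.Eventually.of_forall fun p => rfl)
      | succ k ih =>
        have h1 : birkhoffSum UL id (k+1) FL = birkhoffSum UL id k FL + UL^[k] FL :=
          birkhoffSum_succ UL id k FL
        rw [h1]
        refine (Lp.coeFn_add _ _).trans ?_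
        filter_upwards [ih, hUk k] with p h2 h3
        simp only [Pi.add_apply, h2, h3, birkhoffSum_succ]
    have h1 : birkhoffAverage ℝ UL id n FL = (n : ℝ)⁻¹ • birkhoffSum UL id n FL := rfl
    rw [h1]
    refine (Lp.coeFn_smul _ _).trans ?_
    filter_upwards [hsum n] with p hp
    simp only [Pi.smul_apply, hp]
    rfl
  -- the constant equals ∫ F dm
  set one : Lp ℝ 2 m := (memLp_const (1:ℝ)).toLp (fun _ => (1:ℝ)) with honedef
  have hone : (one : X × G → ℝ) =ᵐ[m] fun _ => (1:ℝ) := (memLp_const (1:ℝ)).coeFn_toLp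
  have hinner : ∀ h : Lp ℝ 2 m, (inner ℝ h one : ℝ) = ∫ p, (h : X × G → ℝ) p ∂m := by
    intro h
    rw [L2.inner_def]
    refine integral_congr_ae ?_
    filter_upwards [hone] with p hp
    rw [hp]
    simp [RCLike.inner_apply]
  have hFint : Integrable F m := rue_integrable hFm hFb m
  have hcstval : cst = ∫ p, F p ∂m := by
    have hIn : Tendsto (fun n => (inner ℝ (birkhoffAverage ℝ UL id n FL) one : ℝ)) atTop
        (𝓝 (inner ℝ P one : ℝ)) := hMET.inner tendsto_const_nhds
    have hev : ∀ᶠ n in atTop, (inner ℝ (birkhoffAverage ℝ UL id n FL) one : ℝ) = ∫ p, F p ∂m := by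
      filter_upwards [eventually_ge_atTop 1] with n hn
      rw [hinner, integral_congr_ae (hBA n), rue_avg_integral hFm hFb hSm n hn]
    have hIn' : Tendsto (fun _ : ℕ => ∫ p, F p ∂m) atTop (𝓝 (inner ℝ P one : ℝ)) :=
      Tendsto.congr' hev hIn
    have h2 : (inner ℝ P one : ℝ) = ∫ p, F p ∂m := tendsto_nhds_unique hIn' tendsto_const_nhds
    rw [← h2, hinner]
    exact ((integral_congr_ae hcst).trans (by simp)).symm
  -- norm convergence and the fiberwise L² error
  have hnorm : Tendsto (fun n => ‖birkhoffAverage ℝ UL id n FL - P‖) atTop (𝓝 0) := by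
    rw [← tendsto_iff_norm_sub_tendsto_zero]
    exact hMET
  set Efun : ℕ → X → ℝ :=
    fun n x => ∫ g, (birkhoffAverage ℝ S F n (x, g) - cst) ^ 2 ∂μG with hEdef
  have hsqm : ∀ n : ℕ, Measurable fun p : X × G => (birkhoffAverage ℝ S F n p - cst) ^ 2 :=
    fun n => ((hbam n).sub measurable_const).pow_const 2
  have hcstb : |cst| ≤ M := by
    rw [hcstval]
    calc |∫ p, F p ∂m| = ‖∫ p, F p ∂m‖ := (Real.norm_eq_abs _).symm
      _ ≤ M * (m univ).toReal := norm_integral_le_of_norm_le_const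
          (Filter.Eventually.of_forall fun p => by simpa [Real.norm_eq_abs] using hFb p)
      _ = M := by simp
  have hdiffb : ∀ (n : ℕ) (p : X × G), |birkhoffAverage ℝ S F n p - cst| ≤ 2 * M := by
    intro n p
    calc |birkhoffAverage ℝ S F n p - cst| ≤ |birkhoffAverage ℝ S F n p| + |cst| := abs_sub _ _
      _ ≤ M + M := add_le_add (hAb n p) hcstb
      _ = 2 * M := by ring
  have hsqb : ∀ (n : ℕ) (p : X × G), |(birkhoffAverage ℝ S F n p - cst) ^ 2| ≤ (2 * M) ^ 2 := by
    intro n p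
    rw [abs_pow, sq_abs, ← sq_abs]
    exact pow_le_pow_left₀ (abs_nonneg _) (hdiffb n p) 2
  have hsqint : ∀ n : ℕ, Integrable (fun p : X × G => (birkhoffAverage ℝ S F n p - cst) ^ 2) m :=
    fun n => rue_integrable (hsqm n) (hsqb n) m
  have hEfm : ∀ n : ℕ, Measurable (Efun n) := fun n =>
    ((hsqm n).stronglyMeasurable.integral_prod_right').measurable
  have hEfnonneg : ∀ n x, 0 ≤ Efun n x := fun n x => integral_nonneg fun g => sq_nonneg _
  have hEfint : ∀ n : ℕ, Integrable (Efun n) μ := fun n => (hsqint n).integral_prod_left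
  have hcoeDiff : ∀ n : ℕ, ((birkhoffAverage ℝ UL id n FL - P : Lp ℝ 2 m) : X × G → ℝ)
      =ᵐ[m] fun p => birkhoffAverage ℝ S F n p - cst := by
    intro n
    refine (Lp.coeFn_sub _ _).trans ?_
    filter_upwards [hBA n, hcst] with p h1 h2
    simp only [Pi.sub_apply, h1, h2]
    rfl
  have hFub : ∀ n : ℕ, ∫ x, Efun n x ∂μ = ‖birkhoffAverage ℝ UL id n FL - P‖ ^ 2 := by
    intro n
    have h1 : ‖birkhoffAverage ℝ UL id n FL - P‖ ^ 2
        = (inner ℝ (birkhoffAverage ℝ UL id n FL - P) (birkhoffAverage ℝ UL id n FL - P) : ℝ) :=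
      (real_inner_self_eq_norm_sq _).symm
    rw [h1, L2.inner_def]
    have h2 : ∫ p, (inner ℝ (((birkhoffAverage ℝ UL id n FL - P : Lp ℝ 2 m)) p)
          (((birkhoffAverage ℝ UL id n FL - P : Lp ℝ 2 m)) p) : ℝ) ∂m
        = ∫ p, (birkhoffAverage ℝ S F n p - cst) ^ 2 ∂m := by
      refine integral_congr_ae ?_
      filter_upwards [hcoeDiff n] with p hp
      rw [hp]
      simp [RCLike.inner_apply, sq]
    rw [h2, hmdef, integral_prod _ (by rw [← hmdef]; exact hsqint n)]
  -- main ε-estimate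
  have hFintν : Integrable F ν := rue_integrable hFm hFb ν
  have key : ∀ ε : ℝ, 0 < ε → |∫ p, F p ∂ν - cst| ≤ 2 * ε := by
    intro ε hε
    obtain ⟨O, hO, h1O, hOprop⟩ := rue_unifCont u hu hε
    set δ : ℝ := ε ^ 2 * (μG O).toReal with hδdef
    have hμGO : 0 < (μG O).toReal :=
      ENNReal.toReal_pos (hO.measure_pos μG ⟨1, h1O⟩).ne' (measure_ne_top _ _)
    have hδpos : 0 < δ := mul_pos (pow_pos hε 2) hμGO
    set B : ℕ → Set X := fun n => {x | δ ≤ Efun n x} with hBdef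
    have hBmeas : ∀ n, MeasurableSet (B n) := fun n => measurableSet_le measurable_const (hEfm n)
    -- pointwise estimate
    have hpt : ∀ (n : ℕ) (p : X × G), |birkhoffAverage ℝ S F n p - cst|
        ≤ 2 * ε + (2 * M) * (B n ×ˢ (univ : Set G)).indicator (fun _ => (1:ℝ)) p := by
      intro n p
      obtain ⟨x, g₀⟩ := p
      by_cases hcase : |birkhoffAverage ℝ S F n (x, g₀) - cst| ≤ 2 * ε
      · refine hcase.trans ?_
        have h0 : 0 ≤ (2 * M) * (B n ×ˢ (univ : Set G)).indicator (fun _ => (1:ℝ)) (x, g₀) :=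
          mul_nonneg (by linarith) (Set.indicator_nonneg (fun _ _ => zero_le_one) _)
        linarith
      · push_neg at hcase
        have hFk : ∀ (h : G) (k : ℕ), F (S^[k] (x, h))
            = A.indicator (fun _ => (1:ℝ)) (T^[k] x) * u (rueCocycle T φ k x * h) := by
          intro h k
          rw [rue_iter T φ k (x, h)]
        have hdiff : ∀ g : G, g / g₀ ∈ O →
            |birkhoffAverage ℝ S F n (x, g) - birkhoffAverage ℝ S F n (x, g₀)| ≤ ε := by
          intro g hg
          have hterm : ∀ k : ℕ, |F (S^[k] (x, g)) - F (S^[k] (x, g₀))| ≤ ε := by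
            intro k
            rw [hFk g k, hFk g₀ k, ← mul_sub, abs_mul]
            have h2 : |u (rueCocycle T φ k x * g) - u (rueCocycle T φ k x * g₀)| ≤ ε := by
              refine hOprop _ _ ?_
              rw [mul_div_mul_left_eq_div]
              exact hg
            calc |A.indicator (fun _ => (1:ℝ)) (T^[k] x)|
                  * |u (rueCocycle T φ k x * g) - u (rueCocycle T φ k x * g₀)|
                ≤ 1 * ε := mul_le_mul (hind _) h2 (abs_nonneg _) zero_le_one
              _ = ε := one_mul ε
          have h3 : birkhoffAverage ℝ S F n (x, g) - birkhoffAverage ℝ S F n (x, g₀)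
              = (n : ℝ)⁻¹ * ∑ k ∈ Finset.range n, (F (S^[k] (x, g)) - F (S^[k] (x, g₀))) := by
            rw [birkhoffAverage, birkhoffAverage, smul_eq_mul, smul_eq_mul, ← mul_sub,
              birkhoffSum, birkhoffSum, Finset.sum_sub_distrib]
          rw [h3, abs_mul, abs_of_nonneg (inv_nonneg.2 (Nat.cast_nonneg n))]
          calc (n:ℝ)⁻¹ * |∑ k ∈ Finset.range n, (F (S^[k] (x, g)) - F (S^[k] (x, g₀)))|
              ≤ (n:ℝ)⁻¹ * ((n:ℝ) * ε) := by
                refine mul_le_mul_of_nonneg_left ?_ (inv_nonneg.2 (Nat.cast_nonneg n))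
                calc |∑ k ∈ Finset.range n, (F (S^[k] (x, g)) - F (S^[k] (x, g₀)))|
                    ≤ ∑ k ∈ Finset.range n, |F (S^[k] (x, g)) - F (S^[k] (x, g₀))| :=
                      Finset.abs_sum_le_sum_abs _ _
                  _ ≤ ∑ _k ∈ Finset.range n, ε := Finset.sum_le_sum fun k _ => hterm k
                  _ = (n:ℝ) * ε := by simp [mul_comm]
            _ = ((n:ℝ)⁻¹ * (n:ℝ)) * ε := by ring
            _ ≤ 1 * ε := mul_le_mul_of_nonneg_right (hinvn n) hε.le
            _ = ε := one_mul ε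
        set W : Set G := (fun g => g / g₀) ⁻¹' O with hWdef
        have hWopen : IsOpen W := hO.preimage (continuous_id.div_const g₀)
        have hWmeas : MeasurableSet W := hWopen.measurableSet
        have hWmem : ∀ g ∈ W, ε ≤ |birkhoffAverage ℝ S F n (x, g) - cst| := by
          intro g hg
          have h4 := hdiff g hg
          have htri : |birkhoffAverage ℝ S F n (x, g₀) - cst|
              ≤ |birkhoffAverage ℝ S F n (x, g) - cst|
                + |birkhoffAverage ℝ S F n (x, g₀) - birkhoffAverage ℝ S F n (x, g)| := by
            have h7 : birkhoffAverage ℝ S F n (x, g₀) - cst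
                = (birkhoffAverage ℝ S F n (x, g) - cst)
                  + (birkhoffAverage ℝ S F n (x, g₀) - birkhoffAverage ℝ S F n (x, g)) := by ring
            rw [h7]; exact abs_add_le _ _
          rw [abs_sub_comm (birkhoffAverage ℝ S F n (x, g₀))
            (birkhoffAverage ℝ S F n (x, g))] at htri
          linarith
        have hμW : μG W = μG O := by
          have hWW : W = (fun g => g * g₀⁻¹) ⁻¹' O := by
            ext g; simp [hWdef, div_eq_mul_inv]
          rw [hWW, measure_preimage_mul_right μG g₀⁻¹ O]
        have hintg : Integrable (fun g => (birkhoffAverage ℝ S F n (x, g) - cst) ^ 2) μG :=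
          rue_integrable ((hsqm n).comp measurable_prodMk_left) (fun g => hsqb n (x, g)) μG
        have hsqx : ∀ g ∈ W, ε ^ 2 ≤ (birkhoffAverage ℝ S F n (x, g) - cst) ^ 2 := by
          intro g hg
          have h := hWmem g hg
          calc ε ^ 2 ≤ |birkhoffAverage ℝ S F n (x, g) - cst| ^ 2 := pow_le_pow_left₀ hε.le h 2
            _ = (birkhoffAverage ℝ S F n (x, g) - cst) ^ 2 := sq_abs _
        have hlow : δ ≤ Efun n x := by
          have h1 : ∫ g in W, ε ^ 2 ∂μG
              ≤ ∫ g in W, (birkhoffAverage ℝ S F n (x, g) - cst) ^ 2 ∂μG :=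
            setIntegral_mono_on (integrableOn_const (measure_ne_top μG W))
              hintg.integrableOn hWmeas hsqx
          have h2 : ∫ g in W, (birkhoffAverage ℝ S F n (x, g) - cst) ^ 2 ∂μG ≤ Efun n x :=
            setIntegral_le_integral hintg (Filter.Eventually.of_forall fun g => sq_nonneg _)
          have h3 : ∫ g in W, (ε ^ 2 : ℝ) ∂μG = ε ^ 2 * (μG W).toReal := by
            rw [setIntegral_const, smul_eq_mul, mul_comm]; rfl
          rw [hδdef, ← hμW]
          linarith
        have hxB : x ∈ B n := hlow
        have hindone : (B n ×ˢ (univ : Set G)).indicator (fun _ => (1:ℝ)) (x, g₀) = 1 :=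
          Set.indicator_of_mem (Set.mem_prod.mpr ⟨hxB, mem_univ _⟩) _
        rw [hindone]
        have h6 := hdiffb n (x, g₀)
        linarith
    -- Markov inequality
    have hMark : ∀ n : ℕ, (μ (B n)).toReal
        ≤ δ⁻¹ * ‖birkhoffAverage ℝ UL id n FL - P‖ ^ 2 := by
      intro n
      have h1 : δ * (μ (B n)).toReal ≤ ∫ x, Efun n x ∂μ := by
        have h2 : ∫ x in B n, δ ∂μ ≤ ∫ x in B n, Efun n x ∂μ :=
          setIntegral_mono_on (integrableOn_const (measure_ne_top μ _))
            (hEfint n).integrableOn (hBmeas n) (fun x hx => hx)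
        have h3 : ∫ x in B n, Efun n x ∂μ ≤ ∫ x, Efun n x ∂μ :=
          setIntegral_le_integral (hEfint n) (Filter.Eventually.of_forall (hEfnonneg n))
        have h4 : ∫ _x in B n, δ ∂μ = δ * (μ (B n)).toReal := by
          rw [setIntegral_const, smul_eq_mul, mul_comm]; rfl
        linarith
      rw [hFub n] at h1
      calc (μ (B n)).toReal = δ⁻¹ * (δ * (μ (B n)).toReal) := by field_simp
        _ ≤ δ⁻¹ * ‖birkhoffAverage ℝ UL id n FL - P‖ ^ 2 :=
            mul_le_mul_of_nonneg_left h1 (inv_nonneg.2 hδpos.le)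
    -- the estimate for each n ≥ 1
    have hbAint : ∀ n, Integrable (fun p => birkhoffAverage ℝ S F n p) ν :=
      fun n => rue_integrable (hbam n) (hAb n) ν
    have hEst : ∀ n : ℕ, 1 ≤ n →
        |∫ p, F p ∂ν - cst| ≤ 2 * ε + (2 * M) * (μ (B n)).toReal := by
      intro n hn
      have h0 : ∫ p, F p ∂ν = ∫ p, birkhoffAverage ℝ S F n p ∂ν :=
        (rue_avg_integral hFm hFb hν n hn).symm
      have hIndInt : Integrable ((B n ×ˢ (univ : Set G)).indicator (fun _ => (1:ℝ))) ν :=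
        (integrable_const (1:ℝ)).indicator ((hBmeas n).prod MeasurableSet.univ)
      have h1 : |∫ p, F p ∂ν - cst| ≤ ∫ p, |birkhoffAverage ℝ S F n p - cst| ∂ν := by
        have h2 : ∫ p, (birkhoffAverage ℝ S F n p - cst) ∂ν
            = ∫ p, birkhoffAverage ℝ S F n p ∂ν - cst := by
          rw [integral_sub (hbAint n) (integrable_const cst), integral_const]
          simp
        rw [h0, ← h2]
        calc |∫ p, (birkhoffAverage ℝ S F n p - cst) ∂ν|
            = ‖∫ p, (birkhoffAverage ℝ S F n p - cst) ∂ν‖ := (Real.norm_eq_abs _).symm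
          _ ≤ ∫ p, ‖birkhoffAverage ℝ S F n p - cst‖ ∂ν := norm_integral_le_integral_norm _
          _ = ∫ p, |birkhoffAverage ℝ S F n p - cst| ∂ν := by simp [Real.norm_eq_abs]
      have h3 : ∫ p, |birkhoffAverage ℝ S F n p - cst| ∂ν
          ≤ ∫ p, (2 * ε + (2 * M) * (B n ×ˢ (univ : Set G)).indicator (fun _ => (1:ℝ)) p) ∂ν := by
        refine integral_mono ?_ ?_ (hpt n)
        · exact rue_integrable ((hbam n).sub measurable_const).abs
            (C := 2 * M) (fun p => by rw [abs_abs]; exact hdiffb n p) ν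
        · exact (integrable_const _).add (hIndInt.const_mul _)
      have h4 : ∫ p, (2 * ε + (2 * M) * (B n ×ˢ (univ : Set G)).indicator (fun _ => (1:ℝ)) p) ∂ν
          = 2 * ε + (2 * M) * (ν (B n ×ˢ (univ : Set G))).toReal := by
        rw [integral_add (integrable_const _) (hIndInt.const_mul _), integral_const]
        have h8 : ∫ p, (2 * M) * ((B n ×ˢ (univ : Set G)).indicator (fun _ => (1:ℝ)) p) ∂ν
            = (2 * M) * ∫ p, (B n ×ˢ (univ : Set G)).indicator (fun _ => (1:ℝ)) p ∂ν :=
          integral_const_mul _ _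
        rw [h8, integral_indicator_const (1:ℝ) ((hBmeas n).prod MeasurableSet.univ)]
        simp [Measure.real]
      have h5 : ν (B n ×ˢ (univ : Set G)) = μ (B n) := by
        rw [Set.prod_univ]
        conv_rhs => rw [← hproj]
        rw [Measure.map_apply measurable_fst (hBmeas n)]
      rw [h4, h5] at h3
      linarith
    -- pass to the limit
    have hμB0 : Tendsto (fun n => (μ (B n)).toReal) atTop (𝓝 0) := by
      have hrhs : Tendsto (fun n => δ⁻¹ * ‖birkhoffAverage ℝ UL id n FL - P‖ ^ 2) atTop
          (𝓝 0) := by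
        have h := (tendsto_const_nhds : Tendsto (fun _ : ℕ => δ⁻¹) atTop (𝓝 δ⁻¹)).mul
          (hnorm.pow 2)
        simpa using h
      exact squeeze_zero (fun n => ENNReal.toReal_nonneg) hMark hrhs
    have hlim : Tendsto (fun n => 2 * ε + (2 * M) * (μ (B n)).toReal) atTop (𝓝 (2 * ε)) := by
      have h := (tendsto_const_nhds : Tendsto (fun _ : ℕ => 2 * ε) atTop (𝓝 (2 * ε))).add
        ((tendsto_const_nhds : Tendsto (fun _ : ℕ => 2 * M) atTop (𝓝 (2 * M))).mul hμB0)
      simpa using h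
    exact ge_of_tendsto hlim (Filter.eventually_atTop.2 ⟨1, fun n hn => hEst n hn⟩)
  -- conclusion
  have hzero : ∫ p, F p ∂ν = cst := by
    rcases le_or_gt (|∫ p, F p ∂ν - cst|) 0 with h | h
    · have h2 := abs_nonneg (∫ p, F p ∂ν - cst)
      have h0 : |∫ p, F p ∂ν - cst| = 0 := le_antisymm h h2
      have h3 := abs_eq_zero.mp h0
      linarith
    · exfalso
      have h4 := key (|∫ p, F p ∂ν - cst| / 4) (by linarith)
      linarith
  show ∫ p, F p ∂ν = ∫ p, F p ∂m
  rw [hzero, hcstval]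

lemma rue_dct {α : Type*} [MeasurableSpace α] (ρ : Measure α) [IsFiniteMeasure ρ]
    {h : ℕ → α → ℝ} (hm : ∀ n, Measurable (h n)) (hb : ∀ n p, |h n p| ≤ 1)
    {hlimf : α → ℝ} (hl : ∀ p, Tendsto (fun n => h n p) atTop (𝓝 (hlimf p))) :
    Tendsto (fun n => ∫ p, h n p ∂ρ) atTop (𝓝 (∫ p, hlimf p ∂ρ)) :=
  tendsto_integral_of_dominated_convergence (fun _ => 1)
    (fun n => (hm n).aestronglyMeasurable) (integrable_const 1)
    (fun n => Filter.Eventually.of_forall fun p => by simpa [Real.norm_eq_abs] using hb n p)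
    (Filter.Eventually.of_forall hl)

/-- The measures agree on rectangles whose `G`-side is a level set of a continuous function. -/
lemma rue_rect_zeroSet
    {X : Type*} [MeasurableSpace X]
    {G : Type*} [CommGroup G] [TopologicalSpace G] [IsTopologicalGroup G]
    [CompactSpace G] [MeasurableSpace G] [BorelSpace G]
    (μ : Measure X) [IsProbabilityMeasure μ]
    (μG : Measure G) [μG.IsHaarMeasure] [IsProbabilityMeasure μG]
    (T : X → X) (φ : X → G)
    (hergext : Ergodic (fun p : X × G => (T p.1, φ p.1 * p.2)) (μ.prod μG))
    (ν : Measure (X × G)) [IsProbabilityMeasure ν]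
    (hν : MeasurePreserving (fun p : X × G => (T p.1, φ p.1 * p.2)) ν ν)
    (hproj : ν.map Prod.fst = μ)
    {A : Set X} (hA : MeasurableSet A) {f : G → ℝ} (hf : Continuous f) :
    ν (A ×ˢ (f ⁻¹' {1})) = μ A * μG (f ⁻¹' {1}) := by
  classical
  set Z : Set G := f ⁻¹' {1} with hZdef
  have hZm : MeasurableSet Z := (isClosed_singleton.preimage hf).measurableSet
  set v : ℕ → G → ℝ := fun n g => max 0 (1 - (n : ℝ) * |f g - 1|) with hvdef
  have hvcont : ∀ n, Continuous (v n) := fun n =>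
    continuous_const.max (continuous_const.sub (continuous_const.mul
      ((hf.sub continuous_const).abs)))
  have hvnonneg : ∀ n g, 0 ≤ v n g := fun n g => le_max_left _ _
  have hvle : ∀ n g, v n g ≤ 1 := by
    intro n g
    refine max_le zero_le_one ?_
    have h1 : 0 ≤ (n : ℝ) * |f g - 1| := by positivity
    linarith
  have hvlim : ∀ g : G,
      Tendsto (fun n => v n g) atTop (𝓝 (Z.indicator (fun _ => (1:ℝ)) g)) := by
    intro g
    by_cases hg : g ∈ Z
    · have h1 : f g = 1 := hg
      have h2 : ∀ n : ℕ, v n g = 1 := by intro n; simp [hvdef, h1]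
      rw [Set.indicator_of_mem hg]
      simpa [h2] using (tendsto_const_nhds : Tendsto (fun _ : ℕ => (1:ℝ)) atTop (𝓝 1))
    · have h1 : f g ≠ 1 := by simpa [hZdef] using hg
      have hd : 0 < |f g - 1| := abs_pos.2 (sub_ne_zero.2 h1)
      rw [Set.indicator_of_notMem hg]
      have hev : ∀ᶠ n : ℕ in atTop, v n g = 0 := by
        obtain ⟨N, hN⟩ := exists_nat_gt (1 / |f g - 1|)
        refine Filter.eventually_atTop.2 ⟨N, fun n hn => ?_⟩
        have h2 : 1 / |f g - 1| < (n : ℝ) := lt_of_lt_of_le hN (by exact_mod_cast hn)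
        have h3 : 1 < (n : ℝ) * |f g - 1| := by
          rw [div_lt_iff₀ hd] at h2; linarith
        have h4 : 1 - (n : ℝ) * |f g - 1| ≤ 0 := by linarith
        simp [hvdef, max_eq_left h4]
      have hev' : (fun n => v n g) =ᶠ[atTop] fun _ => (0:ℝ) := hev
      exact Tendsto.congr' hev'.symm tendsto_const_nhds
  have hprodb : ∀ (n : ℕ) (p : X × G),
      |A.indicator (fun _ => (1:ℝ)) p.1 * v n p.2| ≤ 1 := by
    intro n p
    rw [abs_mul]
    have h1 : |A.indicator (fun _ => (1:ℝ)) p.1| ≤ 1 := by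
      by_cases hx : p.1 ∈ A <;> simp [Set.indicator_apply, hx]
    have h2 : |v n p.2| ≤ 1 := by
      rw [abs_of_nonneg (hvnonneg n p.2)]; exact hvle n p.2
    calc |A.indicator (fun _ => (1:ℝ)) p.1| * |v n p.2| ≤ 1 * 1 :=
          mul_le_mul h1 h2 (abs_nonneg _) zero_le_one
      _ = 1 := one_mul 1
  have hprodm : ∀ n, Measurable fun p : X × G => A.indicator (fun _ => (1:ℝ)) p.1 * v n p.2 :=
    fun n => ((measurable_const.indicator hA).comp measurable_fst).mul
      ((hvcont n).measurable.comp measurable_snd)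
  have hprodlim : ∀ p : X × G,
      Tendsto (fun n => A.indicator (fun _ => (1:ℝ)) p.1 * v n p.2) atTop
        (𝓝 (A.indicator (fun _ => (1:ℝ)) p.1 * Z.indicator (fun _ => (1:ℝ)) p.2)) :=
    fun p => (hvlim p.2).const_mul _
  have hindprod : (fun p : X × G =>
      A.indicator (fun _ => (1:ℝ)) p.1 * Z.indicator (fun _ => (1:ℝ)) p.2)
      = (A ×ˢ Z).indicator (fun _ => (1:ℝ)) := by
    funext p
    by_cases h1 : p.1 ∈ A <;> by_cases h2 : p.2 ∈ Z <;>
      simp [Set.indicator_apply, h1, h2, Set.mem_prod]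
  have hlim1 : Tendsto (fun n => ∫ p : X × G, A.indicator (fun _ => (1:ℝ)) p.1 * v n p.2 ∂ν)
      atTop (𝓝 ((ν (A ×ˢ Z)).toReal)) := by
    have h := rue_dct ν hprodm hprodb hprodlim
    rw [hindprod] at h
    rwa [integral_indicator_const (1:ℝ) (hA.prod hZm), smul_eq_mul, mul_one] at h
  have hlim2 : Tendsto
      (fun n => ∫ p : X × G, A.indicator (fun _ => (1:ℝ)) p.1 * v n p.2 ∂(μ.prod μG))
      atTop (𝓝 (((μ.prod μG) (A ×ˢ Z)).toReal)) := by
    have h := rue_dct (μ.prod μG) hprodm hprodb hprodlim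
    rw [hindprod] at h
    rwa [integral_indicator_const (1:ℝ) (hA.prod hZm), smul_eq_mul, mul_one] at h
  have heq : ∀ n, ∫ p : X × G, A.indicator (fun _ => (1:ℝ)) p.1 * v n p.2 ∂ν
      = ∫ p : X × G, A.indicator (fun _ => (1:ℝ)) p.1 * v n p.2 ∂(μ.prod μG) :=
    fun n => rue_integral_eq μ μG T φ hergext ν hν hproj hA (v n) (hvcont n)
  have hto : (ν (A ×ˢ Z)).toReal = ((μ.prod μG) (A ×ˢ Z)).toReal := by
    refine tendsto_nhds_unique ?_ hlim2
    exact (tendsto_congr heq).1 hlim1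
  have h1 : ν (A ×ˢ Z) = (μ.prod μG) (A ×ˢ Z) :=
    (ENNReal.toReal_eq_toReal_iff' (measure_ne_top _ _) (measure_ne_top _ _)).1 hto
  rw [h1, Measure.prod_prod]

/-- The inequality `μ A * μG B ≤ ν (A ×ˢ B)` for all Borel sets, via inner regularity of the
Haar measure by level sets of continuous functions (Halmos' completion regularity). -/
lemma rue_rect_le
    {X : Type*} [MeasurableSpace X]
    {G : Type*} [CommGroup G] [TopologicalSpace G] [IsTopologicalGroup G]
    [CompactSpace G] [MeasurableSpace G] [BorelSpace G]
    (μ : Measure X) [IsProbabilityMeasure μ]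
    (μG : Measure G) [μG.IsHaarMeasure] [IsProbabilityMeasure μG]
    (T : X → X) (φ : X → G)
    (hergext : Ergodic (fun p : X × G => (T p.1, φ p.1 * p.2)) (μ.prod μG))
    (ν : Measure (X × G)) [IsProbabilityMeasure ν]
    (hν : MeasurePreserving (fun p : X × G => (T p.1, φ p.1 * p.2)) ν ν)
    (hproj : ν.map Prod.fst = μ)
    {A : Set X} (hA : MeasurableSet A) {B : Set G} (hB : MeasurableSet B) :
    μ A * μG B ≤ ν (A ×ˢ B) := by
  have hreg := Measure.innerRegularWRT_preimage_one_hasCompactSupport_measure_ne_top_of_group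
    (μ := μG)
  have hsup : μG B = ⨆ (Z : Set G) (_ : (∃ f : G → ℝ, Continuous f ∧ HasCompactSupport f ∧
      Z = f ⁻¹' {1}) ∧ Z ⊆ B), μG Z := by
    refine le_antisymm ?_ ?_
    · refine le_of_forall_lt fun r hr => ?_
      obtain ⟨Z, hZB, hZp, hZr⟩ := hreg ⟨hB, measure_ne_top _ _⟩ r hr
      rw [lt_iSup_iff]
      exact ⟨Z, lt_iSup_iff.2 ⟨⟨hZp, hZB⟩, hZr⟩⟩
    · exact iSup_le fun Z => iSup_le fun hZ => measure_mono hZ.2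
  calc μ A * μG B
      = ⨆ (Z : Set G) (_ : (∃ f : G → ℝ, Continuous f ∧ HasCompactSupport f ∧
          Z = f ⁻¹' {1}) ∧ Z ⊆ B), μ A * μG Z := by
        rw [hsup, ENNReal.mul_iSup]
        congr 1
        funext Z
        rw [ENNReal.mul_iSup]
    _ ≤ ν (A ×ˢ B) := by
        refine iSup_le fun Z => iSup_le fun hZ => ?_
        obtain ⟨⟨f, hfc, _hfs, hZf⟩, hZB⟩ := hZ
        have h1 : μ A * μG Z = ν (A ×ˢ Z) := by
          rw [hZf]
          exact (rue_rect_zeroSet μ μG T φ hergext ν hν hproj hA hfc).symm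
        rw [h1]
        exact measure_mono (Set.prod_mono Set.Subset.rfl hZB)

end RUEAux

/-- **Relative unique ergodicity of ergodic compact group
extensions.** Let `T` be ergodic on `(X, μ)`, `G` a compact (abelian) group with
normalized Haar measure `μG`, and `φ : X → G` a cocycle such that the skew product
`T_φ (x, g) = (T x, φ x * g)` is ergodic for `μ ⊗ μG`.  Then `μ ⊗ μG` is the only
`T_φ`-invariant probability measure on `X × G` projecting onto `μ`. -/
theorem relative_unique_ergodicity_of_group_extension
    {X : Type*} [MeasurableSpace X]
    (μ : Measure X) [IsProbabilityMeasure μ]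
    (T : X → X) (hT : Ergodic T μ)
    {G : Type*} [CommGroup G] [TopologicalSpace G] [IsTopologicalGroup G]
    [CompactSpace G] [MeasurableSpace G] [BorelSpace G]
    (μG : Measure G) [μG.IsHaarMeasure] [IsProbabilityMeasure μG]
    (φ : X → G) (hφ : Measurable φ)
    (hergext : Ergodic (fun p : X × G => (T p.1, φ p.1 * p.2)) (μ.prod μG)) :
    ∀ ν : Measure (X × G), IsProbabilityMeasure ν →
      MeasurePreserving (fun p : X × G => (T p.1, φ p.1 * p.2)) ν ν →
      ν.map Prod.fst = μ →
      ν = μ.prod μG := by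
  intro ν hνP hνMP hνproj
  haveI := hνP
  have hrect : ∀ (s : Set X) (t : Set G), MeasurableSet s → MeasurableSet t →
      ν (s ×ˢ t) = μ s * μG t := by
    intro s t hs ht
    have h1 : μ s * μG t ≤ ν (s ×ˢ t) :=
      rue_rect_le μ μG T φ hergext ν hνMP hνproj hs ht
    have h2 : μ s * μG tᶜ ≤ ν (s ×ˢ tᶜ) :=
      rue_rect_le μ μG T φ hergext ν hνMP hνproj hs ht.compl
    have hsum : ν (s ×ˢ t) + ν (s ×ˢ tᶜ) = μ s := by
      rw [← measure_union (Set.disjoint_prod.2 (Or.inr disjoint_compl_right)) (hs.prod ht.compl)]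
      have hU : s ×ˢ t ∪ s ×ˢ tᶜ = s ×ˢ (univ : Set G) := by
        rw [← Set.prod_union, Set.union_compl_self]
      rw [hU, Set.prod_univ]
      conv_rhs => rw [← hνproj]
      rw [Measure.map_apply measurable_fst hs]
    have hsum2 : μ s * μG t + μ s * μG tᶜ = μ s := by
      rw [← mul_add, measure_add_measure_compl ht, measure_univ, mul_one]
    by_contra hne
    have hlt : μ s * μG t < ν (s ×ˢ t) := h1.lt_of_ne fun h => hne h.symm
    have hflip : μ s < μ s := by
      calc μ s = μ s * μG t + μ s * μG tᶜ := hsum2.symm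
        _ < ν (s ×ˢ t) + ν (s ×ˢ tᶜ) :=
            ENNReal.add_lt_add_of_lt_of_le
              (ENNReal.mul_ne_top (measure_ne_top μ s) (measure_ne_top μG tᶜ)) hlt h2
        _ = μ s := hsum
    exact lt_irrefl _ hflip
  exact (Measure.prod_eq (fun sA tB hsA htB => hrect sA tB hsA htB)).symm
end
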